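/- arXiv:math/0107212 — 5 statements merged into one kernel-verified Lean document; each statement's English description precedes it below -/
import Mathlib

section
/- For every smooth function f : U → ℝ and every smooth function φ : (0,∞) → ℝ with φ′ ≠ 0 and φ″ ≠ 0 everywhere, the fiberwise spherically symmetric Lagrangian L(x,v) = φ(e^{−f(x)}·|v|) on U × (ℝⁿ∖{0}) satisfies L′ ≠ 0 and L″ ≠ 0 everywhere, and its Euler–Lagrange force field F — the unique extended covector field satisfying Σ_s ∇̃_s∇̃_k L · F^s + Σ_s ∇_s∇̃_k L · v^s − ∇_k L = 0 (with F^s = Σ_r g^{sr} F_r) — is given by F_r = −|v|²·∂f/∂x^r + 2·(Σ_s (∂f/∂x^s) v^s)·v_r. Moreover this F equals the normal-shift form F_r = −|v| Σ_s (∇_s W / W′) · (2 v^s v_r/|v|² − δ^s_r) with W(x,v) = |v|·e^{−f(x)}. -/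
open Real Set
open scoped ContDiff

noncomputable section

abbrev Vec (n : ℕ) := Fin n → ℝ

/-- Partial derivative of an extended field `f(x,v)` with respect to `x^q`. -/
def pdx {n : ℕ} (f : Vec n × Vec n → ℝ) (q : Fin n) (p : Vec n × Vec n) : ℝ :=
  fderiv ℝ f p (Pi.single q 1, 0)

/-- Partial derivative of an extended field `f(x,v)` with respect to `v^k`. -/
def pdv {n : ℕ} (f : Vec n × Vec n → ℝ) (k : Fin n) (p : Vec n × Vec n) : ℝ :=
  fderiv ℝ f p (0, Pi.single k 1)

/-- Christoffel symbols `Γ^k_{ij}(x)` of a metric `g`. -/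
def Christoffel {n : ℕ} (g : Vec n → Matrix (Fin n) (Fin n) ℝ) (k i j : Fin n)
    (x : Vec n) : ℝ :=
  (1/2) * ∑ l, (g x)⁻¹ k l *
    (fderiv ℝ (fun y => g y l j) x (Pi.single i 1)
      + fderiv ℝ (fun y => g y l i) x (Pi.single j 1)
      - fderiv ℝ (fun y => g y i j) x (Pi.single l 1))

/-- `|v|`, the norm of `v` in the metric `g` at the point `x`. -/
def nrm {n : ℕ} (g : Vec n → Matrix (Fin n) (Fin n) ℝ) (x v : Vec n) : ℝ :=
  Real.sqrt (∑ i, ∑ j, g x i j * v i * v j)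

/-- Index lowering: `v_r = Σ_s g_{rs} v^s`. -/
def lower {n : ℕ} (g : Vec n → Matrix (Fin n) (Fin n) ℝ) (x v : Vec n) (r : Fin n) : ℝ :=
  ∑ s, g x r s * v s

/-- Spatial gradient `∇_q f` of an extended scalar field. -/
def sgrad {n : ℕ} (g : Vec n → Matrix (Fin n) (Fin n) ℝ) (f : Vec n × Vec n → ℝ)
    (q : Fin n) (p : Vec n × Vec n) : ℝ :=
  pdx f q p - ∑ a, ∑ b, p.2 a * Christoffel g b q a p.1 * pdv f b p

/-- Spatial gradient `∇_q X_j` of an extended covector field. -/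
def sgradCov {n : ℕ} (g : Vec n → Matrix (Fin n) (Fin n) ℝ) (X : Fin n → Vec n × Vec n → ℝ)
    (q j : Fin n) (p : Vec n × Vec n) : ℝ :=
  pdx (X j) q p - ∑ a, ∑ b, p.2 a * Christoffel g b q a p.1 * pdv (X j) b p
    - ∑ b, Christoffel g b q j p.1 * X b p

/-!
The Lagrangian is `L = φ ∘ W` with `W = |v| e^{-f}`, the norm of `v` for the conformal metric
`e^{-2f} g`. The chain rule splits the Euler–Lagrange expression as
`E_k(φ ∘ W) = φ''(W) ∇̃_k W · Ẇ + φ'(W) E_k(W)`, where `Ẇ = Σ_s ∇̃_s W F^s + Σ_s ∇_s W v^s` is the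
derivative of `W` along the motion. The spatial gradient `∇_q` is the derivative along the
horizontal lift of `∂_q`, and metric compatibility of the Levi-Civita connection makes `|v|` and
`v_k` parallel: `∇|v| = 0` and `∇ v_k = 0`. Hence `∇_s W = -W ∂_s f`, `∇̃_s W = e^{-f} v_s / |v|`,
and the second gradients of `W` are explicit; for the given `F` both `Ẇ` and `E_k(W)` vanish, and
`∇_s W / W' = -|v| ∂_s f` is the normal-shift form.
-/

open scoped Topology Matrix

section HorizontalLift

variable {n : ℕ}

def horizontalLift (g : Vec n → Matrix (Fin n) (Fin n) ℝ) (q : Fin n) (p : Vec n × Vec n) :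
    Vec n × Vec n :=
  (Pi.single q 1, fun b => -∑ a, p.2 a * Christoffel g b q a p.1)

theorem horizontalLift_eq (g : Vec n → Matrix (Fin n) (Fin n) ℝ) (q : Fin n)
    (p : Vec n × Vec n) :
    horizontalLift g q p = (Pi.single q 1, 0) +
      ∑ b, (-∑ a, p.2 a * Christoffel g b q a p.1) • ((0 : Vec n), (Pi.single b 1 : Vec n)) := by
  ext b <;> simp [horizontalLift, Prod.fst_sum, Prod.snd_sum, Pi.single_apply]

theorem sgrad_eq_fderiv_horizontalLift (g : Vec n → Matrix (Fin n) (Fin n) ℝ)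
    (X : Vec n × Vec n → ℝ) (q : Fin n) (p : Vec n × Vec n) :
    sgrad g X q p = fderiv ℝ X p (horizontalLift g q p) := by
  simp only [horizontalLift_eq, map_add, map_sum, map_smul, sgrad, pdx, pdv, smul_eq_mul,
    Finset.sum_mul, neg_mul, Finset.sum_neg_distrib, ← sub_eq_add_neg]
  rw [Finset.sum_comm]

theorem sgradCov_eq_sgrad_sub (g : Vec n → Matrix (Fin n) (Fin n) ℝ)
    (X : Fin n → Vec n × Vec n → ℝ) (q j : Fin n) (p : Vec n × Vec n) :
    sgradCov g X q j p = sgrad g (X j) q p - ∑ b, Christoffel g b q j p.1 * X b p :=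
  rfl

end HorizontalLift

section MetricAlgebra

variable {n : ℕ} {g : Vec n → Matrix (Fin n) (Fin n) ℝ} {x : Vec n}

def partialMetric (g : Vec n → Matrix (Fin n) (Fin n) ℝ) (x : Vec n) (q i j : Fin n) : ℝ :=
  fderiv ℝ (fun y => g y i j) x (Pi.single q 1)

theorem partialMetric_symm (hsym : ∀ᶠ y in 𝓝 x, (g y).IsSymm) (q i j : Fin n) :
    partialMetric g x q i j = partialMetric g x q j i := by
  have h : (fun y => g y i j) =ᶠ[𝓝 x] fun y => g y j i := hsym.mono fun y hy => hy.apply j i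
  rw [partialMetric, h.fderiv_eq, partialMetric]

theorem sum_mul_Christoffel (hinv : g x * (g x)⁻¹ = 1) (t q a : Fin n) :
    ∑ b, g x t b * Christoffel g b q a x = 1 / 2 *
      (partialMetric g x q t a + partialMetric g x a t q - partialMetric g x t q a) := by
  set T : Vec n := fun l =>
    partialMetric g x q l a + partialMetric g x a l q - partialMetric g x l q a
  have h : ∀ b, Christoffel g b q a x = 1 / 2 * ((g x)⁻¹ *ᵥ T) b := fun b => rfl
  simp only [h, mul_left_comm _ (1 / 2 : ℝ), ← Finset.mul_sum]
  change 1 / 2 * (g x *ᵥ ((g x)⁻¹ *ᵥ T)) t = _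
  rw [Matrix.mulVec_mulVec, hinv, Matrix.one_mulVec]

theorem sum_Christoffel_mul_lower (hsym : (g x).IsSymm) (hinv : g x * (g x)⁻¹ = 1)
    (q a : Fin n) (v : Vec n) :
    ∑ b, Christoffel g b q a x * lower g x v b = ∑ t, 1 / 2 *
      (partialMetric g x q t a + partialMetric g x a t q - partialMetric g x t q a) * v t := by
  simp only [lower, Finset.mul_sum, ← sum_mul_Christoffel hinv, Finset.sum_mul]
  rw [Finset.sum_comm]
  refine Finset.sum_congr rfl fun t _ => Finset.sum_congr rfl fun b _ => ?_
  rw [hsym.apply t b]; ring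

theorem sum_partialMetric_mul_mul (hsym : (g x).IsSymm) (hinv : g x * (g x)⁻¹ = 1)
    (hd : ∀ q i j, partialMetric g x q i j = partialMetric g x q j i) (q : Fin n) (v : Vec n) :
    ∑ i, ∑ j, partialMetric g x q i j * v i * v j =
      2 * ∑ b, (∑ a, v a * Christoffel g b q a x) * lower g x v b := by
  have hswap : ∑ a, ∑ t, v a * partialMetric g x a t q * v t =
      ∑ a, ∑ t, v a * partialMetric g x t q a * v t := by
    rw [Finset.sum_comm]
    exact Finset.sum_congr rfl fun a _ => Finset.sum_congr rfl fun t _ => by rw [hd]; ring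
  have h : ∑ b, (∑ a, v a * Christoffel g b q a x) * lower g x v b =
      ∑ a, v a * ∑ b, Christoffel g b q a x * lower g x v b := by
    simp only [Finset.sum_mul, Finset.mul_sum, mul_assoc]
    exact Finset.sum_comm
  have hterm : ∀ a t, 2 * (v a * (1 / 2 * (partialMetric g x q t a + partialMetric g x a t q
      - partialMetric g x t q a) * v t)) = partialMetric g x q t a * v t * v a
        + (v a * partialMetric g x a t q * v t - v a * partialMetric g x t q a * v t) :=
    fun a t => by ring
  simp only [h, sum_Christoffel_mul_lower hsym hinv, Finset.mul_sum, hterm,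
    Finset.sum_add_distrib, Finset.sum_sub_distrib, hswap, sub_self, add_zero]
  exact Finset.sum_comm

theorem sum_partialMetric_mul (hsym : (g x).IsSymm) (hinv : g x * (g x)⁻¹ = 1)
    (hd : ∀ q i j, partialMetric g x q i j = partialMetric g x q j i) (q k : Fin n) (v : Vec n) :
    ∑ s, partialMetric g x q k s * v s =
      ∑ b, g x k b * (∑ a, v a * Christoffel g b q a x)
        + ∑ b, Christoffel g b q k x * lower g x v b := by
  have h : ∑ b, g x k b * (∑ a, v a * Christoffel g b q a x) =
      ∑ a, v a * ∑ b, g x k b * Christoffel g b q a x := by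
    simp only [Finset.mul_sum]
    rw [Finset.sum_comm]
    exact Finset.sum_congr rfl fun a _ => Finset.sum_congr rfl fun b _ => by ring
  rw [h, sum_Christoffel_mul_lower hsym hinv]
  simp only [sum_mul_Christoffel hinv, ← Finset.sum_add_distrib]
  refine Finset.sum_congr rfl fun a _ => ?_
  rw [hd q a k, hd k a q, hd a q k]
  ring

theorem sum_mul_sum_inv_mul (hinv : g x * (g x)⁻¹ = 1) (F : Vec n) (k : Fin n) :
    ∑ s, g x k s * ∑ r, (g x)⁻¹ s r * F r = F k := by
  change (g x *ᵥ ((g x)⁻¹ *ᵥ F)) k = F k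
  rw [Matrix.mulVec_mulVec, hinv, Matrix.one_mulVec]

theorem sum_lower_mul_sum_inv_mul (hsym : (g x).IsSymm) (hinv : g x * (g x)⁻¹ = 1)
    (v F : Vec n) : ∑ s, lower g x v s * ∑ r, (g x)⁻¹ s r * F r = ∑ r, v r * F r := by
  change (g x *ᵥ v) ⬝ᵥ ((g x)⁻¹ *ᵥ F) = v ⬝ᵥ F
  rw [Matrix.dotProduct_mulVec, ← Matrix.vecMul_transpose, hsym.eq, Matrix.vecMul_vecMul,
    ← Matrix.dotProduct_mulVec, hinv, Matrix.one_mulVec]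

end MetricAlgebra

section Leibniz

variable {E : Type*} [NormedAddCommGroup E] [NormedSpace ℝ E] {a b : E → ℝ} {p : E}

theorem fderiv_mul_apply (ha : DifferentiableAt ℝ a p) (hb : DifferentiableAt ℝ b p) (u : E) :
    fderiv ℝ (fun y => a y * b y) p u = a p * fderiv ℝ b p u + b p * fderiv ℝ a p u := by
  simp [fderiv_fun_mul ha hb]

theorem fderiv_comp_apply {φ : ℝ → ℝ} (hφ : DifferentiableAt ℝ φ (a p))
    (ha : DifferentiableAt ℝ a p) (u : E) :
    fderiv ℝ (fun y => φ (a y)) p u = deriv φ (a p) * fderiv ℝ a p u := by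
  rw [show (fun y => φ (a y)) = φ ∘ a from rfl,
    (hφ.hasDerivAt.comp_hasFDerivAt p ha.hasFDerivAt).fderiv]
  simp

theorem fderiv_div_apply (ha : DifferentiableAt ℝ a p) (hb : DifferentiableAt ℝ b p)
    (hb0 : b p ≠ 0) (u : E) :
    fderiv ℝ (fun y => a y / b y) p u =
      (fderiv ℝ a p u * b p - a p * fderiv ℝ b p u) / b p ^ 2 := by
  simp only [div_eq_mul_inv]
  rw [fderiv_mul_apply (b := fun y => (b y)⁻¹) ha (hb.inv hb0),
    fderiv_comp_apply (differentiableAt_inv hb0) hb, deriv_inv]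
  field_simp
  ring

end Leibniz

section ExtendedFields

variable {n : ℕ} {g : Vec n → Matrix (Fin n) (Fin n) ℝ} {f : Vec n → ℝ} {p : Vec n × Vec n}
  {U : Set (Vec n)} {F : Fin n → Vec n × Vec n → ℝ}

theorem pdv_mul {a b : Vec n × Vec n → ℝ} (ha : DifferentiableAt ℝ a p)
    (hb : DifferentiableAt ℝ b p) (k : Fin n) :
    pdv (fun y => a y * b y) k p = a p * pdv b k p + b p * pdv a k p :=
  fderiv_mul_apply ha hb _

theorem sgrad_mul {a b : Vec n × Vec n → ℝ} (ha : DifferentiableAt ℝ a p)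
    (hb : DifferentiableAt ℝ b p) (q : Fin n) :
    sgrad g (fun y => a y * b y) q p = a p * sgrad g b q p + b p * sgrad g a q p := by
  simp only [sgrad_eq_fderiv_horizontalLift]
  exact fderiv_mul_apply ha hb _

theorem pdv_div {a b : Vec n × Vec n → ℝ} (ha : DifferentiableAt ℝ a p)
    (hb : DifferentiableAt ℝ b p) (hb0 : b p ≠ 0) (k : Fin n) :
    pdv (fun y => a y / b y) k p = (pdv a k p * b p - a p * pdv b k p) / b p ^ 2 :=
  fderiv_div_apply ha hb hb0 _

theorem sgrad_div {a b : Vec n × Vec n → ℝ} (ha : DifferentiableAt ℝ a p)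
    (hb : DifferentiableAt ℝ b p) (hb0 : b p ≠ 0) (q : Fin n) :
    sgrad g (fun y => a y / b y) q p = (sgrad g a q p * b p - a p * sgrad g b q p) / b p ^ 2 := by
  simp only [sgrad_eq_fderiv_horizontalLift]
  exact fderiv_div_apply ha hb hb0 _

theorem Filter.EventuallyEq.pdv_eq {X Y : Vec n × Vec n → ℝ} (h : X =ᶠ[𝓝 p] Y) (k : Fin n) :
    pdv X k p = pdv Y k p := by
  rw [pdv, h.fderiv_eq, pdv]

theorem Filter.EventuallyEq.sgrad_eq {X Y : Vec n × Vec n → ℝ} (h : X =ᶠ[𝓝 p] Y) (q : Fin n) :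
    sgrad g X q p = sgrad g Y q p := by
  rw [sgrad_eq_fderiv_horizontalLift, h.fderiv_eq, ← sgrad_eq_fderiv_horizontalLift]

theorem differentiableAt_comp_fst {h : Vec n → ℝ} (hh : DifferentiableAt ℝ h p.1) :
    DifferentiableAt ℝ (fun p : Vec n × Vec n => h p.1) p :=
  hh.comp p differentiableAt_fst

theorem fderiv_comp_fst_apply {h : Vec n → ℝ} (hh : DifferentiableAt ℝ h p.1)
    (u : Vec n × Vec n) :
    fderiv ℝ (fun p : Vec n × Vec n => h p.1) p u = fderiv ℝ h p.1 u.1 := by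
  rw [HasFDerivAt.fderiv (f := fun p : Vec n × Vec n => h p.1)
    (hh.hasFDerivAt.comp p hasFDerivAt_fst)]
  rfl

theorem differentiableAt_snd_apply (i : Fin n) :
    DifferentiableAt ℝ (fun p : Vec n × Vec n => p.2 i) p := by
  fun_prop

theorem fderiv_snd_apply_apply (i : Fin n) (u : Vec n × Vec n) :
    fderiv ℝ (fun p : Vec n × Vec n => p.2 i) p u = u.2 i := by
  rw [fderiv_apply (Φ := Prod.snd) differentiableAt_snd, fderiv_snd]
  rfl

def sqNorm (g : Vec n → Matrix (Fin n) (Fin n) ℝ) (p : Vec n × Vec n) : ℝ :=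
  ∑ i, ∑ j, g p.1 i j * p.2 i * p.2 j

def lowerField (g : Vec n → Matrix (Fin n) (Fin n) ℝ) (k : Fin n) (p : Vec n × Vec n) : ℝ :=
  lower g p.1 p.2 k

def normField (g : Vec n → Matrix (Fin n) (Fin n) ℝ) (p : Vec n × Vec n) : ℝ :=
  nrm g p.1 p.2

def conformalFactor (f : Vec n → ℝ) (p : Vec n × Vec n) : ℝ :=
  Real.exp (-f p.1)

def conformalNorm (g : Vec n → Matrix (Fin n) (Fin n) ℝ) (f : Vec n → ℝ)
    (p : Vec n × Vec n) : ℝ :=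
  normField g p * conformalFactor f p

theorem sqNorm_eq_sum_mul_lowerField (p : Vec n × Vec n) :
    sqNorm g p = ∑ r, p.2 r * lowerField g r p := by
  simp only [sqNorm, lowerField, lower, Finset.mul_sum]
  exact Finset.sum_congr rfl fun i _ => Finset.sum_congr rfl fun j _ => by ring

theorem sqNorm_pos (hpos : (g p.1).PosDef) (hv : p.2 ≠ 0) : 0 < sqNorm g p := by
  have h := hpos.dotProduct_mulVec_pos hv
  rw [star_trivial] at h
  rw [sqNorm_eq_sum_mul_lowerField]
  exact h

theorem normField_pos (hQ : 0 < sqNorm g p) : 0 < normField g p :=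
  Real.sqrt_pos.2 hQ

theorem normField_sq (hQ : 0 < sqNorm g p) : normField g p ^ 2 = sqNorm g p :=
  Real.sq_sqrt hQ.le

theorem conformalNorm_pos (hQ : 0 < sqNorm g p) : 0 < conformalNorm g f p :=
  mul_pos (normField_pos hQ) (Real.exp_pos _)

theorem differentiableAt_sqNorm (hg : ∀ i j, DifferentiableAt ℝ (fun y => g y i j) p.1) :
    DifferentiableAt ℝ (sqNorm g) p := by
  unfold sqNorm
  fun_prop

theorem fderiv_sqNorm_apply (hg : ∀ i j, DifferentiableAt ℝ (fun y => g y i j) p.1)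
    (hsym : (g p.1).IsSymm) (u : Vec n × Vec n) :
    fderiv ℝ (sqNorm g) p u = ∑ i, ∑ j, fderiv ℝ (fun y => g y i j) p.1 u.1 * p.2 i * p.2 j
      + 2 * ∑ i, u.2 i * lower g p.1 p.2 i := by
  have hgp := fun i j => differentiableAt_comp_fst (hg i j)
  have hterm : ∀ i j, fderiv ℝ (fun q : Vec n × Vec n => g q.1 i j * q.2 i * q.2 j) p u =
      fderiv ℝ (fun y => g y i j) p.1 u.1 * p.2 i * p.2 j
        + (g p.1 i j * p.2 j * u.2 i + g p.1 j i * p.2 i * u.2 j) := by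
    intro i j
    rw [fderiv_mul_apply (a := fun q : Vec n × Vec n => g q.1 i j * q.2 i) (by fun_prop)
      (differentiableAt_snd_apply j), fderiv_mul_apply (hgp i j) (differentiableAt_snd_apply i),
      fderiv_comp_fst_apply (hg i j), fderiv_snd_apply_apply, fderiv_snd_apply_apply,
      ← hsym.apply i j]
    ring
  have hsum : ∀ i, fderiv ℝ (fun q : Vec n × Vec n => ∑ j, g q.1 i j * q.2 i * q.2 j) p u =
      ∑ j, fderiv ℝ (fun q : Vec n × Vec n => g q.1 i j * q.2 i * q.2 j) p u := by
    intro i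
    rw [fderiv_fun_sum fun j _ => by fun_prop, sum_apply]
  unfold sqNorm
  rw [fderiv_fun_sum fun i _ => by fun_prop, sum_apply]
  have hlower : ∑ i, ∑ j, g p.1 i j * p.2 j * u.2 i = ∑ i, u.2 i * lower g p.1 p.2 i := by
    simp only [lower, Finset.mul_sum]
    exact Finset.sum_congr rfl fun i _ => Finset.sum_congr rfl fun j _ => by ring
  have hswap : ∑ i, ∑ j, g p.1 j i * p.2 i * u.2 j = ∑ i, ∑ j, g p.1 i j * p.2 j * u.2 i :=
    Finset.sum_comm
  simp only [hsum, hterm, Finset.sum_add_distrib, hswap, hlower]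
  ring

theorem differentiableAt_lowerField (hg : ∀ i j, DifferentiableAt ℝ (fun y => g y i j) p.1)
    (k : Fin n) : DifferentiableAt ℝ (lowerField g k) p := by
  have hgp := fun i j => differentiableAt_comp_fst (hg i j)
  unfold lowerField lower
  fun_prop

theorem fderiv_lowerField_apply (hg : ∀ i j, DifferentiableAt ℝ (fun y => g y i j) p.1)
    (k : Fin n) (u : Vec n × Vec n) :
    fderiv ℝ (lowerField g k) p u = ∑ s, fderiv ℝ (fun y => g y k s) p.1 u.1 * p.2 s
      + ∑ s, g p.1 k s * u.2 s := by
  have hgp := fun i j => differentiableAt_comp_fst (hg i j)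
  have hterm : ∀ s, fderiv ℝ (fun q : Vec n × Vec n => g q.1 k s * q.2 s) p u =
      fderiv ℝ (fun y => g y k s) p.1 u.1 * p.2 s + g p.1 k s * u.2 s := by
    intro s
    rw [fderiv_mul_apply (hgp k s) (differentiableAt_snd_apply s),
      fderiv_comp_fst_apply (hg k s), fderiv_snd_apply_apply]
    ring
  unfold lowerField lower
  rw [fderiv_fun_sum fun s _ => by fun_prop, sum_apply]
  simp only [hterm, Finset.sum_add_distrib]

theorem differentiableAt_conformalFactor (hf : DifferentiableAt ℝ f p.1) :
    DifferentiableAt ℝ (conformalFactor f) p :=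
  (differentiableAt_comp_fst hf).neg.exp

theorem fderiv_conformalFactor_apply (hf : DifferentiableAt ℝ f p.1) (u : Vec n × Vec n) :
    fderiv ℝ (conformalFactor f) p u = -(conformalFactor f p * fderiv ℝ f p.1 u.1) := by
  unfold conformalFactor
  rw [HasFDerivAt.fderiv (f := fun q : Vec n × Vec n => Real.exp (-f q.1))
    (differentiableAt_comp_fst hf).hasFDerivAt.neg.exp]
  simp [fderiv_comp_fst_apply hf]

theorem differentiableAt_normField (hg : ∀ i j, DifferentiableAt ℝ (fun y => g y i j) p.1)
    (hQ : 0 < sqNorm g p) : DifferentiableAt ℝ (normField g) p :=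
  (differentiableAt_sqNorm hg).sqrt hQ.ne'

theorem fderiv_normField_apply (hg : ∀ i j, DifferentiableAt ℝ (fun y => g y i j) p.1)
    (hQ : 0 < sqNorm g p) (u : Vec n × Vec n) :
    fderiv ℝ (normField g) p u = fderiv ℝ (sqNorm g) p u / (2 * normField g p) := by
  change fderiv ℝ (fun q => √(sqNorm g q)) p u = _
  rw [fderiv_sqrt (differentiableAt_sqNorm hg) hQ.ne']
  simp only [smul_apply, smul_eq_mul, normField, nrm, sqNorm]
  ring

theorem differentiableAt_conformalNorm (hg : ∀ i j, DifferentiableAt ℝ (fun y => g y i j) p.1)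
    (hf : DifferentiableAt ℝ f p.1) (hQ : 0 < sqNorm g p) :
    DifferentiableAt ℝ (conformalNorm g f) p :=
  (differentiableAt_normField hg hQ).mul (differentiableAt_conformalFactor hf)

theorem pdv_sqNorm (hg : ∀ i j, DifferentiableAt ℝ (fun y => g y i j) p.1)
    (hsym : (g p.1).IsSymm) (s : Fin n) : pdv (sqNorm g) s p = 2 * lowerField g s p := by
  simp [pdv, fderiv_sqNorm_apply hg hsym, Pi.single_apply, lowerField]

theorem sgrad_sqNorm (hg : ∀ i j, DifferentiableAt ℝ (fun y => g y i j) p.1)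
    (hsym : (g p.1).IsSymm) (hinv : g p.1 * (g p.1)⁻¹ = 1)
    (hd : ∀ q i j, partialMetric g p.1 q i j = partialMetric g p.1 q j i) (q : Fin n) :
    sgrad g (sqNorm g) q p = 0 := by
  rw [sgrad_eq_fderiv_horizontalLift, fderiv_sqNorm_apply hg hsym]
  change ∑ i, ∑ j, partialMetric g p.1 q i j * p.2 i * p.2 j + _ = _
  simp only [horizontalLift, sum_partialMetric_mul_mul hsym hinv hd, neg_mul,
    Finset.sum_neg_distrib]
  ring

theorem pdv_lowerField (hg : ∀ i j, DifferentiableAt ℝ (fun y => g y i j) p.1) (k s : Fin n) :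
    pdv (lowerField g k) s p = g p.1 k s := by
  simp [pdv, fderiv_lowerField_apply hg, Pi.single_apply]

theorem sgradCov_lowerField (hg : ∀ i j, DifferentiableAt ℝ (fun y => g y i j) p.1)
    (hsym : (g p.1).IsSymm) (hinv : g p.1 * (g p.1)⁻¹ = 1)
    (hd : ∀ q i j, partialMetric g p.1 q i j = partialMetric g p.1 q j i) (q k : Fin n) :
    sgradCov g (lowerField g) q k p = 0 := by
  rw [sgradCov_eq_sgrad_sub, sgrad_eq_fderiv_horizontalLift, fderiv_lowerField_apply hg]
  change ∑ s, partialMetric g p.1 q k s * p.2 s + _ - _ = _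
  simp only [horizontalLift, sum_partialMetric_mul hsym hinv hd, mul_neg, Finset.sum_neg_distrib]
  simp [lowerField]

theorem pdv_conformalFactor (hf : DifferentiableAt ℝ f p.1) (s : Fin n) :
    pdv (conformalFactor f) s p = 0 := by
  simp [pdv, fderiv_conformalFactor_apply hf]

theorem sgrad_conformalFactor (hf : DifferentiableAt ℝ f p.1) (q : Fin n) :
    sgrad g (conformalFactor f) q p = -(conformalFactor f p * fderiv ℝ f p.1 (Pi.single q 1)) := by
  rw [sgrad_eq_fderiv_horizontalLift, fderiv_conformalFactor_apply hf]
  rfl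

theorem pdv_normField (hg : ∀ i j, DifferentiableAt ℝ (fun y => g y i j) p.1)
    (hsym : (g p.1).IsSymm) (hQ : 0 < sqNorm g p) (s : Fin n) :
    pdv (normField g) s p = lowerField g s p / normField g p := by
  have hN := (normField_pos hQ).ne'
  rw [pdv, fderiv_normField_apply hg hQ, ← pdv, pdv_sqNorm hg hsym]
  field_simp

theorem sgrad_normField (hg : ∀ i j, DifferentiableAt ℝ (fun y => g y i j) p.1)
    (hsym : (g p.1).IsSymm) (hinv : g p.1 * (g p.1)⁻¹ = 1)
    (hd : ∀ q i j, partialMetric g p.1 q i j = partialMetric g p.1 q j i) (hQ : 0 < sqNorm g p)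
    (q : Fin n) : sgrad g (normField g) q p = 0 := by
  rw [sgrad_eq_fderiv_horizontalLift, fderiv_normField_apply hg hQ,
    ← sgrad_eq_fderiv_horizontalLift, sgrad_sqNorm hg hsym hinv hd, zero_div]

theorem pdv_conformalNorm (hg : ∀ i j, DifferentiableAt ℝ (fun y => g y i j) p.1)
    (hf : DifferentiableAt ℝ f p.1) (hsym : (g p.1).IsSymm) (hQ : 0 < sqNorm g p) (s : Fin n) :
    pdv (conformalNorm g f) s p = conformalFactor f p * lowerField g s p / normField g p := by
  unfold conformalNorm
  rw [pdv_mul (differentiableAt_normField hg hQ) (differentiableAt_conformalFactor hf),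
    pdv_conformalFactor hf, pdv_normField hg hsym hQ]
  ring

theorem sgrad_conformalNorm (hg : ∀ i j, DifferentiableAt ℝ (fun y => g y i j) p.1)
    (hf : DifferentiableAt ℝ f p.1) (hsym : (g p.1).IsSymm) (hinv : g p.1 * (g p.1)⁻¹ = 1)
    (hd : ∀ q i j, partialMetric g p.1 q i j = partialMetric g p.1 q j i)
    (hQ : 0 < sqNorm g p) (q : Fin n) :
    sgrad g (conformalNorm g f) q p = -(conformalNorm g f p * fderiv ℝ f p.1 (Pi.single q 1)) := by
  unfold conformalNorm
  rw [sgrad_mul (differentiableAt_normField hg hQ) (differentiableAt_conformalFactor hf),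
    sgrad_conformalFactor hf, sgrad_normField hg hsym hinv hd hQ]
  ring

theorem eventually_mem_and_sqNorm_pos (hU : IsOpen U)
    (hg : ∀ i j, DifferentiableOn ℝ (fun y => g y i j) U) (hp : p.1 ∈ U) (hQ : 0 < sqNorm g p) :
    ∀ᶠ q in 𝓝 p, q.1 ∈ U ∧ 0 < sqNorm g q := by
  have hgp : ∀ i j, DifferentiableAt ℝ (fun y => g y i j) p.1 :=
    fun i j => (hg i j).differentiableAt (hU.mem_nhds hp)
  exact (continuousAt_fst.eventually (hU.eventually_mem hp)).and
    ((differentiableAt_sqNorm hgp).continuousAt.eventually (lt_mem_nhds hQ))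

theorem pdv_conformalNorm_eventuallyEq (hU : IsOpen U)
    (hg : ∀ i j, DifferentiableOn ℝ (fun y => g y i j) U) (hf : DifferentiableOn ℝ f U)
    (hsym : ∀ y ∈ U, (g y).IsSymm) (hp : p.1 ∈ U) (hQ : 0 < sqNorm g p) (k : Fin n) :
    pdv (conformalNorm g f) k =ᶠ[𝓝 p]
      fun q => conformalFactor f q * lowerField g k q / normField g q := by
  filter_upwards [eventually_mem_and_sqNorm_pos hU hg hp hQ] with q ⟨hq, hqQ⟩
  exact pdv_conformalNorm (fun i j => (hg i j).differentiableAt (hU.mem_nhds hq))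
    (hf.differentiableAt (hU.mem_nhds hq)) (hsym q.1 hq) hqQ k

theorem pdv_pdv_conformalNorm (hU : IsOpen U)
    (hg : ∀ i j, DifferentiableOn ℝ (fun y => g y i j) U) (hf : DifferentiableOn ℝ f U)
    (hsym : ∀ y ∈ U, (g y).IsSymm) (hp : p.1 ∈ U) (hQ : 0 < sqNorm g p) (k s : Fin n) :
    pdv (pdv (conformalNorm g f) k) s p = conformalFactor f p *
      (g p.1 k s - lowerField g k p * lowerField g s p / normField g p ^ 2) / normField g p := by
  have hgp : ∀ i j, DifferentiableAt ℝ (fun y => g y i j) p.1 :=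
    fun i j => (hg i j).differentiableAt (hU.mem_nhds hp)
  have hfp : DifferentiableAt ℝ f p.1 := hf.differentiableAt (hU.mem_nhds hp)
  have hN := (normField_pos hQ).ne'
  rw [(pdv_conformalNorm_eventuallyEq hU hg hf hsym hp hQ k).pdv_eq,
    pdv_div ((differentiableAt_conformalFactor hfp).fun_mul (differentiableAt_lowerField hgp k))
      (differentiableAt_normField hgp hQ) hN,
    pdv_mul (differentiableAt_conformalFactor hfp) (differentiableAt_lowerField hgp k),
    pdv_lowerField hgp, pdv_conformalFactor hfp, pdv_normField hgp (hsym _ hp) hQ]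
  field_simp
  ring

theorem sgradCov_pdv_conformalNorm (hU : IsOpen U)
    (hg : ∀ i j, DifferentiableOn ℝ (fun y => g y i j) U) (hf : DifferentiableOn ℝ f U)
    (hsym : ∀ y ∈ U, (g y).IsSymm) (hinv : g p.1 * (g p.1)⁻¹ = 1) (hp : p.1 ∈ U)
    (hQ : 0 < sqNorm g p) (q k : Fin n) :
    sgradCov g (fun i => pdv (conformalNorm g f) i) q k p =
      -(fderiv ℝ f p.1 (Pi.single q 1) * pdv (conformalNorm g f) k p) := by
  have hgp : ∀ i j, DifferentiableAt ℝ (fun y => g y i j) p.1 :=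
    fun i j => (hg i j).differentiableAt (hU.mem_nhds hp)
  have hfp : DifferentiableAt ℝ f p.1 := hf.differentiableAt (hU.mem_nhds hp)
  have hd := partialMetric_symm ((hU.eventually_mem hp).mono hsym)
  have hN := (normField_pos hQ).ne'
  have hpar : sgrad g (lowerField g k) q p = ∑ b, Christoffel g b q k p.1 * lowerField g b p :=
    sub_eq_zero.1 (sgradCov_lowerField hgp (hsym _ hp) hinv hd q k)
  have hpdv := fun i => pdv_conformalNorm (f := f) hgp hfp (hsym _ hp) hQ i
  change sgrad g _ q p - _ = _
  rw [(pdv_conformalNorm_eventuallyEq hU hg hf hsym hp hQ k).sgrad_eq,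
    sgrad_div ((differentiableAt_conformalFactor hfp).fun_mul (differentiableAt_lowerField hgp k))
      (differentiableAt_normField hgp hQ) hN,
    sgrad_mul (differentiableAt_conformalFactor hfp) (differentiableAt_lowerField hgp k),
    sgrad_conformalFactor hfp, sgrad_normField hgp (hsym _ hp) hinv hd hQ, hpar]
  have hsum : ∑ b, Christoffel g b q k p.1 * pdv (conformalNorm g f) b p =
      conformalFactor f p / normField g p * ∑ b, Christoffel g b q k p.1 * lowerField g b p := by
    rw [Finset.mul_sum]
    exact Finset.sum_congr rfl fun b _ => by rw [hpdv]; ring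
  rw [hsum, hpdv]
  field_simp
  ring

def derivAlongFlow (g : Vec n → Matrix (Fin n) (Fin n) ℝ) (F : Fin n → Vec n × Vec n → ℝ)
    (X : Vec n × Vec n → ℝ) (p : Vec n × Vec n) : ℝ :=
  (∑ s, pdv X s p * ∑ r, (g p.1)⁻¹ s r * F r p) + ∑ s, sgrad g X s p * p.2 s

def eulerLagrange (g : Vec n → Matrix (Fin n) (Fin n) ℝ) (L : Vec n × Vec n → ℝ)
    (F : Fin n → Vec n × Vec n → ℝ) (k : Fin n) (p : Vec n × Vec n) : ℝ :=
  (∑ s, pdv (pdv L k) s p * ∑ r, (g p.1)⁻¹ s r * F r p)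
    + (∑ s, sgradCov g (fun i => pdv L i) s k p * p.2 s) - sgrad g L k p

theorem eulerLagrange_comp {φ : ℝ → ℝ} {W : Vec n × Vec n → ℝ}
    (hW : ∀ᶠ q in 𝓝 p, DifferentiableAt ℝ W q) (hφ : ∀ᶠ q in 𝓝 p, DifferentiableAt ℝ φ (W q))
    (hφ' : DifferentiableAt ℝ (deriv φ) (W p)) (hdW : ∀ k, DifferentiableAt ℝ (pdv W k) p)
    (k : Fin n) :
    eulerLagrange g (fun q => φ (W q)) F k p =
      deriv (deriv φ) (W p) * pdv W k p * derivAlongFlow g F W p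
        + deriv φ (W p) * eulerLagrange g W F k p := by
  have hpdv : ∀ i, pdv (fun q => φ (W q)) i =ᶠ[𝓝 p] fun q => deriv φ (W q) * pdv W i q :=
    fun i => (hW.and hφ).mono fun q ⟨hWq, hφq⟩ => fderiv_comp_apply hφq hWq _
  have hD : ∀ i u, fderiv ℝ (pdv (fun q => φ (W q)) i) p u =
      deriv (deriv φ) (W p) * fderiv ℝ W p u * pdv W i p
        + deriv φ (W p) * fderiv ℝ (pdv W i) p u := by
    intro i u
    rw [(hpdv i).fderiv_eq, fderiv_mul_apply (a := fun q => deriv φ (W q))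
      (hφ'.comp p hW.self_of_nhds) (hdW i),
      fderiv_comp_apply hφ' hW.self_of_nhds]
    ring
  have hpdv2 : ∀ i s, pdv (pdv (fun q => φ (W q)) i) s p =
      deriv (deriv φ) (W p) * pdv W s p * pdv W i p + deriv φ (W p) * pdv (pdv W i) s p :=
    fun i s => hD i _
  have hsgrad2 : ∀ i q, sgrad g (pdv (fun q => φ (W q)) i) q p =
      deriv (deriv φ) (W p) * sgrad g W q p * pdv W i p
        + deriv φ (W p) * sgrad g (pdv W i) q p := by
    intro i q
    simp only [sgrad_eq_fderiv_horizontalLift]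
    exact hD i _
  have hsgrad : sgrad g (fun q => φ (W q)) k p = deriv φ (W p) * sgrad g W k p := by
    simp only [sgrad_eq_fderiv_horizontalLift]
    exact fderiv_comp_apply hφ.self_of_nhds hW.self_of_nhds _
  simp only [eulerLagrange, derivAlongFlow, sgradCov_eq_sgrad_sub, hpdv2, hsgrad2, hsgrad,
    fun i => (hpdv i).self_of_nhds]
  simp only [add_mul, mul_add, mul_sub, Finset.sum_add_distrib, Finset.sum_sub_distrib,
    Finset.mul_sum, mul_assoc, mul_comm, mul_left_comm]
  ring

def conformalForce (g : Vec n → Matrix (Fin n) (Fin n) ℝ) (f : Vec n → ℝ) (r : Fin n)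
    (p : Vec n × Vec n) : ℝ :=
  -normField g p ^ 2 * fderiv ℝ f p.1 (Pi.single r 1)
    + 2 * (∑ s, fderiv ℝ f p.1 (Pi.single s 1) * p.2 s) * lowerField g r p

theorem sum_mul_conformalForce (hQ : 0 < sqNorm g p) :
    ∑ r, p.2 r * conformalForce g f r p =
      normField g p ^ 2 * ∑ s, fderiv ℝ f p.1 (Pi.single s 1) * p.2 s := by
  have h : ∀ r, p.2 r * conformalForce g f r p =
      -normField g p ^ 2 * (fderiv ℝ f p.1 (Pi.single r 1) * p.2 r)
        + 2 * (∑ s, fderiv ℝ f p.1 (Pi.single s 1) * p.2 s) * (p.2 r * lowerField g r p) :=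
    fun r => by rw [conformalForce]; ring
  simp only [h, Finset.sum_add_distrib, ← Finset.mul_sum, ← sqNorm_eq_sum_mul_lowerField,
    ← normField_sq hQ]
  ring

theorem derivAlongFlow_conformalNorm (hg : ∀ i j, DifferentiableAt ℝ (fun y => g y i j) p.1)
    (hf : DifferentiableAt ℝ f p.1) (hsym : (g p.1).IsSymm) (hinv : g p.1 * (g p.1)⁻¹ = 1)
    (hd : ∀ q i j, partialMetric g p.1 q i j = partialMetric g p.1 q j i)
    (hQ : 0 < sqNorm g p) :
    derivAlongFlow g (conformalForce g f) (conformalNorm g f) p = 0 := by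
  have hN := (normField_pos hQ).ne'
  have h1 : ∑ s, pdv (conformalNorm g f) s p * ∑ r, (g p.1)⁻¹ s r * conformalForce g f r p =
      conformalFactor f p / normField g p * ∑ r, p.2 r * conformalForce g f r p := by
    rw [← sum_lower_mul_sum_inv_mul hsym hinv p.2 (fun r => conformalForce g f r p),
      Finset.mul_sum]
    refine Finset.sum_congr rfl fun s _ => ?_
    rw [pdv_conformalNorm hg hf hsym hQ, lowerField]
    ring
  have h2 : ∑ s, sgrad g (conformalNorm g f) s p * p.2 s =
      -(conformalNorm g f p * ∑ s, fderiv ℝ f p.1 (Pi.single s 1) * p.2 s) := by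
    simp only [sgrad_conformalNorm hg hf hsym hinv hd hQ, Finset.mul_sum, neg_mul,
      Finset.sum_neg_distrib, mul_assoc]
  rw [derivAlongFlow, h1, h2, sum_mul_conformalForce hQ, conformalNorm]
  field_simp
  ring

theorem eulerLagrange_conformalNorm (hU : IsOpen U)
    (hg : ∀ i j, DifferentiableOn ℝ (fun y => g y i j) U) (hf : DifferentiableOn ℝ f U)
    (hsym : ∀ y ∈ U, (g y).IsSymm) (hinv : g p.1 * (g p.1)⁻¹ = 1) (hp : p.1 ∈ U)
    (hQ : 0 < sqNorm g p) (k : Fin n) :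
    eulerLagrange g (conformalNorm g f) (conformalForce g f) k p = 0 := by
  have hgp : ∀ i j, DifferentiableAt ℝ (fun y => g y i j) p.1 :=
    fun i j => (hg i j).differentiableAt (hU.mem_nhds hp)
  have hfp : DifferentiableAt ℝ f p.1 := hf.differentiableAt (hU.mem_nhds hp)
  have hd := partialMetric_symm ((hU.eventually_mem hp).mono hsym)
  have hN := (normField_pos hQ).ne'
  set F := fun r => conformalForce g f r p
  set fv := ∑ s, fderiv ℝ f p.1 (Pi.single s 1) * p.2 s
  have h1 : ∑ s, pdv (pdv (conformalNorm g f) k) s p * ∑ r, (g p.1)⁻¹ s r * F r =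
      conformalFactor f p / normField g p * F k
        - conformalFactor f p * lowerField g k p / normField g p ^ 3 * ∑ r, p.2 r * F r := by
    rw [← sum_mul_sum_inv_mul hinv F k, ← sum_lower_mul_sum_inv_mul (hsym _ hp) hinv p.2 F,
      Finset.mul_sum, Finset.mul_sum, ← Finset.sum_sub_distrib]
    refine Finset.sum_congr rfl fun s _ => ?_
    rw [pdv_pdv_conformalNorm hU hg hf hsym hp hQ, ← lowerField]
    field_simp
  have h2 : ∑ s, sgradCov g (fun i => pdv (conformalNorm g f) i) s k p * p.2 s =
      -(pdv (conformalNorm g f) k p * fv) := by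
    simp only [sgradCov_pdv_conformalNorm hU hg hf hsym hinv hp hQ, fv, Finset.mul_sum,
      ← Finset.sum_neg_distrib]
    exact Finset.sum_congr rfl fun s _ => by ring
  rw [eulerLagrange, h1, h2, sgrad_conformalNorm hgp hfp (hsym _ hp) hinv hd hQ,
    pdv_conformalNorm hgp hfp (hsym _ hp) hQ, sum_mul_conformalForce hQ]
  simp only [F, conformalForce, conformalNorm]
  field_simp
  ring

theorem eulerLagrange_comp_conformalNorm {φ : ℝ → ℝ} (hφ : DifferentiableOn ℝ φ (Ioi 0))
    (hφ' : DifferentiableOn ℝ (deriv φ) (Ioi 0)) (hU : IsOpen U)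
    (hg : ∀ i j, DifferentiableOn ℝ (fun y => g y i j) U) (hf : DifferentiableOn ℝ f U)
    (hsym : ∀ y ∈ U, (g y).IsSymm) (hinv : g p.1 * (g p.1)⁻¹ = 1) (hp : p.1 ∈ U)
    (hQ : 0 < sqNorm g p) (k : Fin n) :
    eulerLagrange g (fun q => φ (conformalNorm g f q)) (conformalForce g f) k p = 0 := by
  have hgp : ∀ i j, DifferentiableAt ℝ (fun y => g y i j) p.1 :=
    fun i j => (hg i j).differentiableAt (hU.mem_nhds hp)
  have hfp : DifferentiableAt ℝ f p.1 := hf.differentiableAt (hU.mem_nhds hp)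
  have hd := partialMetric_symm ((hU.eventually_mem hp).mono hsym)
  have hreg := eventually_mem_and_sqNorm_pos hU hg hp hQ
  have hW : ∀ᶠ q in 𝓝 p, DifferentiableAt ℝ (conformalNorm g f) q :=
    hreg.mono fun q ⟨hq, hqQ⟩ => differentiableAt_conformalNorm
      (fun i j => (hg i j).differentiableAt (hU.mem_nhds hq))
      (hf.differentiableAt (hU.mem_nhds hq)) hqQ
  have hφW : ∀ᶠ q in 𝓝 p, DifferentiableAt ℝ φ (conformalNorm g f q) :=
    hreg.mono fun q ⟨_, hqQ⟩ => hφ.differentiableAt (Ioi_mem_nhds (conformalNorm_pos hqQ))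
  have hdW : ∀ k, DifferentiableAt ℝ (pdv (conformalNorm g f) k) p := fun k =>
    (pdv_conformalNorm_eventuallyEq hU hg hf hsym hp hQ k).differentiableAt_iff.2
      (((differentiableAt_conformalFactor hfp).fun_mul (differentiableAt_lowerField hgp k)).fun_mul
        ((differentiableAt_normField hgp hQ).inv (normField_pos hQ).ne'))
  rw [eulerLagrange_comp hW hφW (hφ'.differentiableAt (Ioi_mem_nhds (conformalNorm_pos hQ))) hdW,
    derivAlongFlow_conformalNorm hgp hfp (hsym _ hp) hinv hd hQ,
    eulerLagrange_conformalNorm hU hg hf hsym hinv hp hQ]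
  ring

theorem conformalForce_eq_normalShift (hg : ∀ i j, DifferentiableAt ℝ (fun y => g y i j) p.1)
    (hf : DifferentiableAt ℝ f p.1) (hsym : (g p.1).IsSymm) (hinv : g p.1 * (g p.1)⁻¹ = 1)
    (hd : ∀ q i j, partialMetric g p.1 q i j = partialMetric g p.1 q j i)
    (hQ : 0 < sqNorm g p) (r : Fin n) :
    conformalForce g f r p = -normField g p * ∑ s,
      sgrad g (conformalNorm g f) s p / conformalFactor f p *
        (2 * p.2 s * lowerField g r p / normField g p ^ 2 - if s = r then 1 else 0) := by
  have hN := (normField_pos hQ).ne'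
  have hc : conformalFactor f p ≠ 0 := (Real.exp_pos _).ne'
  have h : ∀ s, sgrad g (conformalNorm g f) s p / conformalFactor f p *
      (2 * p.2 s * lowerField g r p / normField g p ^ 2 - if s = r then 1 else 0) =
      -(2 * lowerField g r p / normField g p) * (fderiv ℝ f p.1 (Pi.single s 1) * p.2 s)
        + if s = r then normField g p * fderiv ℝ f p.1 (Pi.single s 1) else 0 := by
    intro s
    rw [sgrad_conformalNorm hg hf hsym hinv hd hQ, conformalNorm]
    split_ifs <;> field_simp <;> ring
  rw [Finset.sum_congr rfl fun s _ => h s, Finset.sum_add_distrib, ← Finset.mul_sum,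
    Finset.sum_ite_eq' Finset.univ r, if_pos (Finset.mem_univ r), conformalForce]
  field_simp
  ring

end ExtendedFields

theorem deriv_deriv_comp_mul_left (φ : ℝ → ℝ) (c w : ℝ) :
    deriv (deriv fun w => φ (c * w)) w = c ^ 2 * deriv (deriv φ) (c * w) := by
  have h : (deriv fun w => φ (c * w)) = fun w => c * deriv φ (c * w) :=
    funext fun w => deriv_comp_mul_left (f := φ) (c := c) (x := w)
  rw [h, deriv_const_mul_field, deriv_comp_mul_left, smul_eq_mul]
  ring

/-- For any smooth `f : U → ℝ` and smooth `φ : (0,∞) → ℝ` with `φ′ ≠ 0`,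
`φ″ ≠ 0`, the Lagrangian `L(x,v) = φ(e^{−f(x)}·|v|)` satisfies `L′ ≠ 0`, `L″ ≠ 0`, its
Euler–Lagrange force field is `F_r = −|v|²·∂f/∂x^r + 2(Σ_s ∂f/∂x^s v^s)·v_r`, and this `F`
equals the normal-shift form (8.10) with `W(x,v) = |v|·e^{−f(x)}`. -/
theorem stmt_1 {n : ℕ} (U : Set (Vec n)) (hU : IsOpen U)
    (g : Vec n → Matrix (Fin n) (Fin n) ℝ)
    (hgsmooth : ∀ i j, ContDiffOn ℝ ∞ (fun x => g x i j) U)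
    (hgpos : ∀ x ∈ U, (g x).PosDef)
    (f : Vec n → ℝ) (hf : ContDiffOn ℝ ∞ f U)
    (φ : ℝ → ℝ) (hφ : ContDiffOn ℝ ∞ φ (Ioi (0:ℝ)))
    (hφ' : ∀ w : ℝ, 0 < w → deriv φ w ≠ 0)
    (hφ'' : ∀ w : ℝ, 0 < w → deriv (deriv φ) w ≠ 0)
    (L : Vec n × Vec n → ℝ)
    (hL : ∀ p : Vec n × Vec n, L p = φ (Real.exp (-(f p.1)) * nrm g p.1 p.2))
    (F : Fin n → Vec n × Vec n → ℝ)
    (hF : ∀ r, ∀ p : Vec n × Vec n, F r p =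
      -(nrm g p.1 p.2) ^ 2 * fderiv ℝ f p.1 (Pi.single r 1)
        + 2 * (∑ s, fderiv ℝ f p.1 (Pi.single s 1) * p.2 s) * lower g p.1 p.2 r)
    (W : Vec n × Vec n → ℝ)
    (hW : ∀ p : Vec n × Vec n, W p = nrm g p.1 p.2 * Real.exp (-(f p.1))) :
    ∀ x ∈ U, ∀ v : Vec n, v ≠ 0 →
      -- `L′ ≠ 0` and `L″ ≠ 0` for the fiberwise spherically symmetric Lagrangian
      (deriv (fun w => φ (Real.exp (-(f x)) * w)) (nrm g x v) ≠ 0) ∧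
      (deriv (deriv (fun w => φ (Real.exp (-(f x)) * w))) (nrm g x v) ≠ 0) ∧
      -- `F` solves the Euler–Lagrange force-field equation
      (∀ k : Fin n,
        (∑ s, pdv (pdv L k) s (x, v) * (∑ r, (g x)⁻¹ s r * F r (x, v)))
            + (∑ s, sgradCov g (fun i => pdv L i) s k (x, v) * v s)
            - sgrad g L k (x, v) = 0) ∧
      -- `F` coincides with the normal-shift form (8.10) with `W = |v|·e^{−f}`
      (∀ r : Fin n,
        F r (x, v) =
          -(nrm g x v) * ∑ s, (sgrad g W s (x, v)
                / deriv (fun w => w * Real.exp (-(f x))) (nrm g x v))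
              * (2 * v s * lower g x v r / (nrm g x v) ^ 2
                  - if s = r then 1 else 0)) := by
  obtain rfl : L = fun p => φ (conformalNorm g f p) :=
    funext fun p => by rw [hL, mul_comm]; rfl
  obtain rfl : F = conformalForce g f := funext fun r => funext (hF r)
  obtain rfl : W = conformalNorm g f := funext hW
  intro x hx v hv
  have hsym : ∀ y ∈ U, (g y).IsSymm :=
    fun y hy => Matrix.isHermitian_iff_isSymm.1 (hgpos y hy).isHermitian
  have hinv : g x * (g x)⁻¹ = 1 := Matrix.mul_nonsing_inv _ (hgpos x hx).det_pos.ne'.isUnit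
  have hQ : 0 < sqNorm g (x, v) := sqNorm_pos (hgpos x hx) hv
  have hg : ∀ i j, DifferentiableOn ℝ (fun y => g y i j) U :=
    fun i j => (hgsmooth i j).differentiableOn (by simp)
  have hfU : DifferentiableOn ℝ f U := hf.differentiableOn (by simp)
  have hW0 : 0 < Real.exp (-f x) * nrm g x v := by rw [mul_comm]; exact conformalNorm_pos hQ
  refine ⟨?_, ?_, fun k => ?_, fun r => ?_⟩
  · rw [deriv_comp_mul_left, smul_eq_mul]
    exact mul_ne_zero (Real.exp_pos _).ne' (hφ' _ hW0)
  · rw [deriv_deriv_comp_mul_left]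
    exact mul_ne_zero (pow_ne_zero 2 (Real.exp_pos _).ne') (hφ'' _ hW0)
  · exact eulerLagrange_comp_conformalNorm (hφ.differentiableOn (by simp))
      ((hφ.deriv_of_isOpen isOpen_Ioi (m := ∞) le_rfl).differentiableOn (by simp)) hU hg hfU
      hsym hinv hx hQ k
  · have hderiv : deriv (fun w => w * Real.exp (-f x)) (nrm g x v) = conformalFactor f (x, v) := by
      simp [conformalFactor]
    rw [hderiv]
    exact conformalForce_eq_normalShift (fun i j => (hg i j).differentiableAt (hU.mem_nhds hx))
      (hfU.differentiableAt (hU.mem_nhds hx)) (hsym x hx) hinv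
      (partialMetric_symm ((hU.eventually_mem hx).mono hsym)) hQ r
end
end

section
/- Let f : U → ℝ be smooth and define the extended force field F^k(x,v) = Σ_r g^{kr}(x) F_r with F_r = −|v|²·∂f/∂x^r + 2·(Σ_s (∂f/∂x^s) v^s)·v_r. Then a C² curve t ↦ x(t) in U satisfies the Newtonian equations ∇_t v^k = F^k(x(t),ẋ(t)) (with v(t) = ẋ(t)) if and only if it is a geodesic of the conformally equivalent metric g̃ = e^{−2f}·g, i.e. ẍ^k + Σ_{i,j} Γ̃^k_{ij}(x(t)) ẋ^i ẋ^j = 0 for all k, where Γ̃^k_{ij} are the Christoffel symbols of g̃. -/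
open Real Set
open scoped ContDiff

noncomputable section

/-
Under a conformal change `g̃ = φ g` the Christoffel symbols change by
`Γ̃ᵏᵢⱼ = Γᵏᵢⱼ + (2φ)⁻¹ (δᵏⱼ ∂ᵢφ + δᵏᵢ ∂ⱼφ - gᵢⱼ gᵏˡ ∂ₗφ)`.
For `φ = e^{-2f}` one has `(2φ)⁻¹ ∂φ = -∂f`, and contracting with `vⁱ vʲ` (using `gᵏʳ v_r = vᵏ`)
gives `Γ̃ᵏᵢⱼ vⁱ vʲ = Γᵏᵢⱼ vⁱ vʲ - Fᵏ(x, v)`. So the Newtonian equations and the geodesic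
equations of `g̃` differ only by moving the force term across the equality.
-/
open Finset
open scoped Matrix

section

variable {n : ℕ} {g : Vec n → Matrix (Fin n) (Fin n) ℝ} {φ : Vec n → ℝ} {x : Vec n}

lemma sum_nonsing_inv_mul_apply (hdet : IsUnit (g x).det) (a b : Fin n) :
    ∑ l, (g x)⁻¹ a l * g x l b = if a = b then 1 else 0 := by
  rw [← Matrix.mul_apply, Matrix.nonsing_inv_mul _ hdet, Matrix.one_apply]

lemma fderiv_smul_matrix_apply (hφ : DifferentiableAt ℝ φ x) {i j : Fin n}
    (hg : DifferentiableAt ℝ (fun y => g y i j) x) (w : Vec n) :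
    fderiv ℝ (fun y => (φ y • g y) i j) x w
      = φ x * fderiv ℝ (fun y => g y i j) x w + g x i j * fderiv ℝ φ x w := by
  simp only [Matrix.smul_apply, smul_eq_mul]
  rw [fderiv_fun_mul hφ hg]
  rfl

theorem christoffel_smul (hφ : DifferentiableAt ℝ φ x) (hφ0 : φ x ≠ 0)
    (hg : ∀ i j, DifferentiableAt ℝ (fun y => g y i j) x) (hdet : IsUnit (g x).det)
    (k i j : Fin n) :
    Christoffel (fun y => φ y • g y) k i j x = Christoffel g k i j x
      + (φ x)⁻¹ / 2 * ((if k = j then fderiv ℝ φ x (Pi.single i 1) else 0)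
        + (if k = i then fderiv ℝ φ x (Pi.single j 1) else 0)
        - g x i j * ∑ l, (g x)⁻¹ k l * fderiv ℝ φ x (Pi.single l 1)) := by
  have hinv : (φ x • g x)⁻¹ = (φ x)⁻¹ • (g x)⁻¹ := Matrix.inv_smul' _ (Units.mk0 _ hφ0) hdet
  simp only [Christoffel, hinv, fderiv_smul_matrix_apply hφ (hg _ _)]
  simp only [Matrix.smul_apply, smul_eq_mul]
  have hterm : ∀ l, (φ x)⁻¹ * (g x)⁻¹ k l *
      (φ x * fderiv ℝ (fun y => g y l j) x (Pi.single i 1)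
          + g x l j * fderiv ℝ φ x (Pi.single i 1)
        + (φ x * fderiv ℝ (fun y => g y l i) x (Pi.single j 1)
          + g x l i * fderiv ℝ φ x (Pi.single j 1))
        - (φ x * fderiv ℝ (fun y => g y i j) x (Pi.single l 1)
          + g x i j * fderiv ℝ φ x (Pi.single l 1)))
      = (g x)⁻¹ k l * (fderiv ℝ (fun y => g y l j) x (Pi.single i 1)
          + fderiv ℝ (fun y => g y l i) x (Pi.single j 1)
          - fderiv ℝ (fun y => g y i j) x (Pi.single l 1))
        + (φ x)⁻¹ * (fderiv ℝ φ x (Pi.single i 1) * ((g x)⁻¹ k l * g x l j)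
          + fderiv ℝ φ x (Pi.single j 1) * ((g x)⁻¹ k l * g x l i)
          - g x i j * ((g x)⁻¹ k l * fderiv ℝ φ x (Pi.single l 1))) := by
    intro l
    field_simp
    ring
  rw [sum_congr rfl fun l _ => hterm l]
  simp only [sum_add_distrib, sum_sub_distrib, ← mul_sum, sum_nonsing_inv_mul_apply hdet]
  split_ifs <;> ring

theorem sum_christoffel_smul_mul_mul (hφ : DifferentiableAt ℝ φ x) (hφ0 : φ x ≠ 0)
    (hg : ∀ i j, DifferentiableAt ℝ (fun y => g y i j) x) (hdet : IsUnit (g x).det)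
    (v : Vec n) (k : Fin n) :
    ∑ i, ∑ j, Christoffel (fun y => φ y • g y) k i j x * v i * v j
      = ∑ i, ∑ j, Christoffel g k i j x * v i * v j
        + (φ x)⁻¹ / 2 * (2 * (∑ s, fderiv ℝ φ x (Pi.single s 1) * v s) * v k
          - (∑ i, ∑ j, g x i j * v i * v j)
            * ∑ l, (g x)⁻¹ k l * fderiv ℝ φ x (Pi.single l 1)) := by
  set D := fun s => fderiv ℝ φ x (Pi.single s 1)
  set B := ∑ l, (g x)⁻¹ k l * D l
  have hterm : ∀ i j, Christoffel (fun y => φ y • g y) k i j x * v i * v j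
      = Christoffel g k i j x * v i * v j + (φ x)⁻¹ / 2 * ((if k = j then D i * v i * v k else 0)
        + (if k = i then D j * v j * v k else 0) - g x i j * v i * v j * B) := by
    intro i j
    rw [christoffel_smul hφ hφ0 hg hdet]
    split_ifs <;> subst_vars <;> ring
  simp only [hterm, sum_add_distrib, ← mul_sum, sum_sub_distrib]
  simp only [sum_ite_eq, Finset.mem_univ, if_true, ← sum_mul, sum_ite_irrel, sum_const_zero]
  ring

theorem sum_christoffel_exp_smul_mul_mul {f : Vec n → ℝ} (hf : DifferentiableAt ℝ f x)
    (hg : ∀ i j, DifferentiableAt ℝ (fun y => g y i j) x) (hdet : IsUnit (g x).det)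
    (v : Vec n) (k : Fin n) :
    ∑ i, ∑ j, Christoffel (fun y => Real.exp (-2 * f y) • g y) k i j x * v i * v j
      = ∑ i, ∑ j, Christoffel g k i j x * v i * v j
        - (2 * (∑ s, fderiv ℝ f x (Pi.single s 1) * v s) * v k
          - (∑ i, ∑ j, g x i j * v i * v j)
            * ∑ l, (g x)⁻¹ k l * fderiv ℝ f x (Pi.single l 1)) := by
  have hexp : HasFDerivAt (fun y => Real.exp (-2 * f y))
      (Real.exp (-2 * f x) • (-2 : ℝ) • fderiv ℝ f x) x :=
    (hf.hasFDerivAt.const_mul (-2)).exp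
  have hD : ∀ w, fderiv ℝ (fun y => Real.exp (-2 * f y)) x w
      = -2 * Real.exp (-2 * f x) * fderiv ℝ f x w := fun w => by
    rw [hexp.fderiv]; simp only [smul_apply, smul_eq_mul]; ring
  have hv : ∑ s, fderiv ℝ (fun y => Real.exp (-2 * f y)) x (Pi.single s 1) * v s
      = -2 * Real.exp (-2 * f x) * ∑ s, fderiv ℝ f x (Pi.single s 1) * v s := by
    rw [mul_sum]; exact sum_congr rfl fun s _ => by rw [hD]; ring
  have hinv : ∑ l, (g x)⁻¹ k l * fderiv ℝ (fun y => Real.exp (-2 * f y)) x (Pi.single l 1)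
      = -2 * Real.exp (-2 * f x) * ∑ l, (g x)⁻¹ k l * fderiv ℝ f x (Pi.single l 1) := by
    rw [mul_sum]; exact sum_congr rfl fun l _ => by rw [hD]; ring
  rw [sum_christoffel_smul_mul_mul hexp.differentiableAt (Real.exp_pos _).ne' hg hdet, hv, hinv]
  field_simp
  ring

lemma nrm_sq (hpos : (g x).PosSemidef) (v : Vec n) :
    nrm g x v ^ 2 = ∑ i, ∑ j, g x i j * v i * v j := by
  refine Real.sq_sqrt ?_
  simpa [dotProduct, Matrix.mulVec, mul_sum, mul_assoc, mul_comm, mul_left_comm]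
    using hpos.dotProduct_mulVec_nonneg v

lemma sum_inv_mul_lower (hdet : IsUnit (g x).det) (v : Vec n) (k : Fin n) :
    ∑ r, (g x)⁻¹ k r * lower g x v r = v k := by
  change ((g x)⁻¹ *ᵥ (g x *ᵥ v)) k = v k
  rw [Matrix.mulVec_mulVec, Matrix.nonsing_inv_mul _ hdet, Matrix.one_mulVec]

theorem sum_inv_mul_force (hpos : (g x).PosDef) (a v : Vec n) (k : Fin n) :
    ∑ r, (g x)⁻¹ k r * (-(nrm g x v) ^ 2 * a r + 2 * (∑ s, a s * v s) * lower g x v r)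
      = 2 * (∑ s, a s * v s) * v k
        - (∑ i, ∑ j, g x i j * v i * v j) * ∑ r, (g x)⁻¹ k r * a r := by
  have hdet : IsUnit (g x).det := hpos.det_pos.ne'.isUnit
  rw [← sum_inv_mul_lower hdet v k, nrm_sq hpos.posSemidef, mul_sum, mul_sum, mul_sum,
    ← sum_sub_distrib]
  exact sum_congr rfl fun r _ => by ring

end

theorem stmt_2_general {n : ℕ} (U : Set (Vec n)) (hU : IsOpen U)
    (g : Vec n → Matrix (Fin n) (Fin n) ℝ)
    (hgsmooth : ∀ i j, ContDiffOn ℝ ∞ (fun x => g x i j) U)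
    (hgpos : ∀ x ∈ U, (g x).PosDef)
    (f : Vec n → ℝ) (hf : ContDiffOn ℝ ∞ f U)
    (Flo : Fin n → Vec n × Vec n → ℝ)
    (hFlo : ∀ r, ∀ p : Vec n × Vec n, Flo r p =
      -(nrm g p.1 p.2) ^ 2 * fderiv ℝ f p.1 (Pi.single r 1)
        + 2 * (∑ s, fderiv ℝ f p.1 (Pi.single s 1) * p.2 s) * lower g p.1 p.2 r)
    (Fup : Fin n → Vec n × Vec n → ℝ)
    (hFup : ∀ k, ∀ p : Vec n × Vec n, Fup k p = ∑ r, (g p.1)⁻¹ k r * Flo r p)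
    (gt : Vec n → Matrix (Fin n) (Fin n) ℝ)
    (hgt : ∀ x, gt x = Matrix.of fun i j => Real.exp (-2 * f x) * g x i j)
    (x : ℝ → Vec n) (hxU : ∀ t, x t ∈ U) :
    (∀ t : ℝ, ∀ k : Fin n,
        deriv (fun s => deriv x s k) t
          + ∑ i, ∑ j, Christoffel g k i j (x t) * deriv x t i * deriv x t j
          = Fup k (x t, deriv x t))
      ↔
    (∀ t : ℝ, ∀ k : Fin n,
        deriv (fun s => deriv x s k) t
          + ∑ i, ∑ j, Christoffel gt k i j (x t) * deriv x t i * deriv x t j = 0) := by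
  have hgt_eq : gt = fun y => Real.exp (-2 * f y) • g y := by
    funext y; rw [hgt]; rfl
  have hdiff : ∀ {h : Vec n → ℝ}, ContDiffOn ℝ ∞ h U → ∀ y ∈ U, DifferentiableAt ℝ h y :=
    fun hh y hy => (hh.contDiffAt (hU.mem_nhds hy)).differentiableAt (by simp)
  have hcontract : ∀ t k, ∑ i, ∑ j, Christoffel gt k i j (x t) * deriv x t i * deriv x t j
      = ∑ i, ∑ j, Christoffel g k i j (x t) * deriv x t i * deriv x t j
        - Fup k (x t, deriv x t) := by
    intro t k
    have hpos := hgpos _ (hxU t)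
    simp only [hFup, hFlo, sum_inv_mul_force hpos, hgt_eq]
    exact sum_christoffel_exp_smul_mul_mul (hdiff hf _ (hxU t))
      (fun i j => hdiff (hgsmooth i j) _ (hxU t)) hpos.det_pos.ne'.isUnit _ k
  constructor <;> intro h t k <;> linarith [h t k, hcontract t k]

/-- A C² curve satisfies the Newtonian equations `∇_t v^k = F^k(x,ẋ)` for the
force field `F_r = −|v|²·∂f/∂x^r + 2(Σ_s ∂f/∂x^s v^s)·v_r` if and only if it is a geodesic of
the conformal metric `g̃ = e^{−2f}·g`. -/
theorem stmt_2 {n : ℕ} (U : Set (Vec n)) (hU : IsOpen U)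
    (g : Vec n → Matrix (Fin n) (Fin n) ℝ)
    (hgsmooth : ∀ i j, ContDiffOn ℝ ∞ (fun x => g x i j) U)
    (hgpos : ∀ x ∈ U, (g x).PosDef)
    (f : Vec n → ℝ) (hf : ContDiffOn ℝ ∞ f U)
    (Flo : Fin n → Vec n × Vec n → ℝ)
    (hFlo : ∀ r, ∀ p : Vec n × Vec n, Flo r p =
      -(nrm g p.1 p.2) ^ 2 * fderiv ℝ f p.1 (Pi.single r 1)
        + 2 * (∑ s, fderiv ℝ f p.1 (Pi.single s 1) * p.2 s) * lower g p.1 p.2 r)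
    (Fup : Fin n → Vec n × Vec n → ℝ)
    (hFup : ∀ k, ∀ p : Vec n × Vec n, Fup k p = ∑ r, (g p.1)⁻¹ k r * Flo r p)
    (gt : Vec n → Matrix (Fin n) (Fin n) ℝ)
    (hgt : ∀ x, gt x = Matrix.of fun i j => Real.exp (-2 * f x) * g x i j)
    (x : ℝ → Vec n) (hx : ContDiff ℝ 2 x) (hxU : ∀ t, x t ∈ U) :
    (∀ t : ℝ, ∀ k : Fin n,
        deriv (fun s => deriv x s k) t
          + ∑ i, ∑ j, Christoffel g k i j (x t) * deriv x t i * deriv x t j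
          = Fup k (x t, deriv x t))
      ↔
    (∀ t : ℝ, ∀ k : Fin n,
        deriv (fun s => deriv x s k) t
          + ∑ i, ∑ j, Christoffel gt k i j (x t) * deriv x t i * deriv x t j = 0) :=
  stmt_2_general U hU g hgsmooth hgpos f hf Flo hFlo Fup hFup gt hgt x hxU
end
end

section
/- Let L be a smooth Lagrangian on U × ℝⁿ whose velocity Hessian A_{ks}(x,v) = ∂²L/∂v^k∂v^s is nondegenerate at every point (a regular Lagrangian), and let B(x,v) denote the inverse matrix of A(x,v). Define the extended force field F^s(x,v) = Σ_k B^{sk}·(∇_k L − Σ_j (∇_j∇̃_k L)·v^j), where ∇_j∇̃_k L is the spatial gradient of the extended covector field ∇̃_k L. Then a C² curve t ↦ x(t) in U satisfies the Euler–Lagrange equations (d/dt)(∂L/∂v^k)(x(t),ẋ(t)) − (∂L/∂x^k)(x(t),ẋ(t)) = 0 if and only if it satisfies the Newtonian equations ∇_t v^s = F^s(x(t),ẋ(t)) with v(t) = ẋ(t). -/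
open Real Set
open scoped ContDiff

noncomputable section

/-!
By the chain rule, the Euler–Lagrange expression along the curve is
`A ẍ + (∂²L/∂x^j∂v^k) ẋ^j − ∂L/∂x^k`. Expanding the covariant derivatives in
`c_k = ∇_k L − Σ_j (∇_j∇̃_k L) v^j`, the symmetry of `Γ` makes the two terms
`Γ^b_{ka} v^a ∂L/∂v^b` cancel, leaving `c = ∂L/∂x − (∂²L/∂x∂v) v + A (Γ v v)`.
Hence the Euler–Lagrange expression is `A (∇_t v) − c`, and since `A` is invertible and
`F = A⁻¹ c`, it vanishes exactly when `∇_t v = F`.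
-/

open scoped Matrix

theorem Matrix.mulVec_eq_iff_eq_nonsing_inv_mulVec {ι α : Type*} [Fintype ι] [DecidableEq ι]
    [CommRing α] {M : Matrix ι ι α} (hM : IsUnit M.det) (u c : ι → α) :
    M *ᵥ u = c ↔ u = M⁻¹ *ᵥ c := by
  constructor
  · rintro rfl
    rw [Matrix.mulVec_mulVec, Matrix.nonsing_inv_mul _ hM, Matrix.one_mulVec]
  · rintro rfl
    rw [Matrix.mulVec_mulVec, Matrix.mul_nonsing_inv _ hM, Matrix.one_mulVec]

theorem fderiv_apply_eq_sum_pdx_add_sum_pdv {n : ℕ} (f : Vec n × Vec n → ℝ) (p : Vec n × Vec n)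
    (w₁ w₂ : Vec n) :
    fderiv ℝ f p (w₁, w₂) = ∑ q, w₁ q * pdx f q p + ∑ b, w₂ b * pdv f b p := by
  have hsingle : ∀ (w : Vec n) q, Pi.single q (w q) = w q • (Pi.single q 1 : Vec n) := by
    intro w q
    rw [← Pi.single_smul, smul_eq_mul, mul_one]
  conv_lhs => rw [← (fderiv ℝ f p).comp_inl_add_comp_inr, ← Finset.univ_sum_single w₁,
    ← Finset.univ_sum_single w₂]
  simp only [map_sum, hsingle, map_smul, ContinuousLinearMap.comp_apply,
    ContinuousLinearMap.inl_apply, ContinuousLinearMap.inr_apply, smul_eq_mul, pdx, pdv]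

theorem deriv_comp_prodMk_eq_sum {n : ℕ} {f : Vec n × Vec n → ℝ} {γ w : ℝ → Vec n} {t : ℝ}
    (hf : DifferentiableAt ℝ f (γ t, w t)) (hγ : DifferentiableAt ℝ γ t)
    (hw : DifferentiableAt ℝ w t) :
    deriv (fun s => f (γ s, w s)) t
      = ∑ q, deriv γ t q * pdx f q (γ t, w t) + ∑ b, deriv w t b * pdv f b (γ t, w t) :=
  (hf.hasFDerivAt.comp_hasDerivAt t (hγ.hasDerivAt.prodMk hw.hasDerivAt)).deriv.trans
    (fderiv_apply_eq_sum_pdx_add_sum_pdv f _ _ _)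

theorem ContDiffAt.differentiableAt_pdv {n : ℕ} {f : Vec n × Vec n → ℝ} {p : Vec n × Vec n}
    (hf : ContDiffAt ℝ 2 f p) (k : Fin n) : DifferentiableAt ℝ (pdv f k) p :=
  ((hf.fderiv_right (m := 1) le_rfl).clm_apply contDiffAt_const).differentiableAt one_ne_zero

theorem Christoffel_comm_of_eventually_isSymm {n : ℕ} {g : Vec n → Matrix (Fin n) (Fin n) ℝ}
    {x : Vec n} (hg : ∀ᶠ y in nhds x, (g y).IsSymm) (k i j : Fin n) :
    Christoffel g k i j x = Christoffel g k j i x := by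
  have hderiv : ∀ a b, fderiv ℝ (fun y => g y a b) x = fderiv ℝ (fun y => g y b a) x :=
    fun a b => Filter.EventuallyEq.fderiv_eq <| hg.mono fun y hy => hy.apply b a
  unfold Christoffel
  congr 1
  refine Finset.sum_congr rfl fun l _ => ?_
  rw [hderiv i j]
  ring

def velHessian {n : ℕ} (L : Vec n × Vec n → ℝ) (p : Vec n × Vec n) : Matrix (Fin n) (Fin n) ℝ :=
  Matrix.of fun k s => pdv (pdv L k) s p

/-- The covector `c` of the force field `F = A⁻¹ c`. -/
def forceCovector {n : ℕ} (g : Vec n → Matrix (Fin n) (Fin n) ℝ) (L : Vec n × Vec n → ℝ)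
    (p : Vec n × Vec n) (k : Fin n) : ℝ :=
  sgrad g L k p - ∑ j, sgradCov g (fun i => pdv L i) j k p * p.2 j

def covDerivVelocity {n : ℕ} (g : Vec n → Matrix (Fin n) (Fin n) ℝ) (x : ℝ → Vec n) (t : ℝ)
    (s : Fin n) : ℝ :=
  deriv (fun u => deriv x u s) t + ∑ i, ∑ j, Christoffel g s i j (x t) * deriv x t i * deriv x t j

theorem forceCovector_eq {n : ℕ} {g : Vec n → Matrix (Fin n) (Fin n) ℝ} {p : Vec n × Vec n}
    (hΓ : ∀ b i j, Christoffel g b i j p.1 = Christoffel g b j i p.1)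
    (L : Vec n × Vec n → ℝ) (k : Fin n) :
    forceCovector g L p k
      = pdx L k p - ∑ j, pdx (pdv L k) j p * p.2 j
        + ∑ s, pdv (pdv L k) s p * ∑ i, ∑ j, Christoffel g s i j p.1 * p.2 i * p.2 j := by
  have hquad : ∑ j, (∑ a, ∑ b, p.2 a * Christoffel g b j a p.1 * pdv (pdv L k) b p) * p.2 j
      = ∑ s, pdv (pdv L k) s p * ∑ i, ∑ j, Christoffel g s i j p.1 * p.2 i * p.2 j := by
    simp only [Finset.mul_sum, Finset.sum_mul]
    rw [Finset.sum_comm_cycle]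
    exact Finset.sum_congr rfl fun s _ => Finset.sum_congr rfl fun i _ =>
      Finset.sum_congr rfl fun j _ => by ring
  have hcancel : ∑ j, (∑ b, Christoffel g b j k p.1 * pdv L b p) * p.2 j
      = ∑ a, ∑ b, p.2 a * Christoffel g b k a p.1 * pdv L b p := by
    simp only [Finset.sum_mul, hΓ _ _ k]
    exact Finset.sum_congr rfl fun a _ => Finset.sum_congr rfl fun b _ => by ring
  simp only [forceCovector, sgrad, sgradCov, sub_mul, Finset.sum_sub_distrib]
  linear_combination hquad + hcancel

theorem deriv_pdv_sub_pdx_eq_velHessian_mulVec_sub {n : ℕ}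
    {g : Vec n → Matrix (Fin n) (Fin n) ℝ} {L : Vec n × Vec n → ℝ} {x : ℝ → Vec n} {t : ℝ}
    (hL : ContDiffAt ℝ 2 L (x t, deriv x t)) (hx : DifferentiableAt ℝ x t)
    (hv : DifferentiableAt ℝ (deriv x) t)
    (hΓ : ∀ b i j, Christoffel g b i j (x t) = Christoffel g b j i (x t)) (k : Fin n) :
    deriv (fun s => pdv L k (x s, deriv x s)) t - pdx L k (x t, deriv x t)
      = (velHessian L (x t, deriv x t) *ᵥ covDerivVelocity g x t) k
        - forceCovector g L (x t, deriv x t) k := by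
  have hacc : ∀ s, deriv (fun u => deriv x u s) t = deriv (deriv x) t s := fun s =>
    (hasDerivAt_pi.mp hv.hasDerivAt s).deriv
  rw [deriv_comp_prodMk_eq_sum (hL.differentiableAt_pdv k) hx hv,
    forceCovector_eq (p := (x t, deriv x t)) hΓ]
  simp only [velHessian, covDerivVelocity, hacc, Matrix.mulVec, dotProduct, Matrix.of_apply,
    mul_add, Finset.sum_add_distrib, mul_comm (deriv x t _), mul_comm (deriv (deriv x) t _)]
  ring

theorem stmt_4_general {n : ℕ} (U : Set (Vec n)) (hU : IsOpen U)
    (g : Vec n → Matrix (Fin n) (Fin n) ℝ)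
    (hgpos : ∀ x ∈ U, (g x).PosDef)
    (L : Vec n × Vec n → ℝ) (hL : ContDiffOn ℝ ∞ L (U ×ˢ (univ : Set (Vec n))))
    (A : Vec n × Vec n → Matrix (Fin n) (Fin n) ℝ)
    (hA : ∀ p, A p = Matrix.of fun k s => pdv (pdv L k) s p)
    (hreg : ∀ p ∈ U ×ˢ (univ : Set (Vec n)), IsUnit (A p).det)
    (B : Vec n × Vec n → Matrix (Fin n) (Fin n) ℝ) (hB : ∀ p, B p = (A p)⁻¹)
    (F : Fin n → Vec n × Vec n → ℝ)
    (hF : ∀ s, ∀ p : Vec n × Vec n, F s p =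
      ∑ k, B p s k *
        (sgrad g L k p - ∑ j, sgradCov g (fun i => pdv L i) j k p * p.2 j))
    (x : ℝ → Vec n) (hx : ContDiff ℝ 2 x) (hxU : ∀ t, x t ∈ U) :
    (∀ t : ℝ, ∀ k : Fin n,
        deriv (fun s => pdv L k (x s, deriv x s)) t - pdx L k (x t, deriv x t) = 0)
      ↔
    (∀ t : ℝ, ∀ s : Fin n,
        deriv (fun u => deriv x u s) t
            + ∑ i, ∑ j, Christoffel g s i j (x t) * deriv x t i * deriv x t j
          = F s (x t, deriv x t)) := by
  have hv : ContDiff ℝ 1 (deriv x) :=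
    (contDiff_succ_iff_deriv.mp (by exact_mod_cast hx : ContDiff ℝ (1 + 1 : ℕ) x)).2.2
  refine forall_congr' fun t => ?_
  have hp : (x t, deriv x t) ∈ U ×ˢ (univ : Set (Vec n)) := ⟨hxU t, mem_univ _⟩
  have hLp : ContDiffAt ℝ 2 L (x t, deriv x t) :=
    (hL.contDiffAt ((hU.prod isOpen_univ).mem_nhds hp)).of_le (WithTop.coe_le_coe.mpr le_top)
  have hΓ : ∀ b i j, Christoffel g b i j (x t) = Christoffel g b j i (x t) :=
    Christoffel_comm_of_eventually_isSymm <| Filter.eventually_of_mem (hU.mem_nhds (hxU t))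
      fun y hy => Matrix.isHermitian_iff_isSymm.mp (hgpos y hy).isHermitian
  have hEL := deriv_pdv_sub_pdx_eq_velHessian_mulVec_sub hLp
    (hx.differentiable (by norm_num) t) (hv.differentiable one_ne_zero t) hΓ
  have hAp : A (x t, deriv x t) = velHessian L (x t, deriv x t) := hA _
  calc (∀ k, deriv (fun s => pdv L k (x s, deriv x s)) t - pdx L k (x t, deriv x t) = 0)
      ↔ velHessian L (x t, deriv x t) *ᵥ covDerivVelocity g x t
          = forceCovector g L (x t, deriv x t) := by
        simp only [hEL, sub_eq_zero, funext_iff]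
    _ ↔ covDerivVelocity g x t = B (x t, deriv x t) *ᵥ forceCovector g L (x t, deriv x t) := by
        rw [hB, hAp]
        exact Matrix.mulVec_eq_iff_eq_nonsing_inv_mulVec (hAp ▸ hreg _ hp) _ _
    _ ↔ _ := by simp only [funext_iff, hF, Matrix.mulVec, dotProduct]; rfl

/-- For a regular Lagrangian (velocity Hessian `A` everywhere nondegenerate,
with inverse `B`), with force field `F^s = Σ_k B^{sk}(∇_k L − Σ_j ∇_j ∇̃_k L · v^j)`, a C²
curve satisfies the Euler–Lagrange equations iff it satisfies the Newtonian equations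
`∇_t v^s = F^s(x, ẋ)`. -/
theorem stmt_4 {n : ℕ} (U : Set (Vec n)) (hU : IsOpen U)
    (g : Vec n → Matrix (Fin n) (Fin n) ℝ)
    (hgsmooth : ∀ i j, ContDiffOn ℝ ∞ (fun x => g x i j) U)
    (hgpos : ∀ x ∈ U, (g x).PosDef)
    (L : Vec n × Vec n → ℝ) (hL : ContDiffOn ℝ ∞ L (U ×ˢ (univ : Set (Vec n))))
    (A : Vec n × Vec n → Matrix (Fin n) (Fin n) ℝ)
    (hA : ∀ p, A p = Matrix.of fun k s => pdv (pdv L k) s p)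
    (hreg : ∀ p ∈ U ×ˢ (univ : Set (Vec n)), IsUnit (A p).det)
    (B : Vec n × Vec n → Matrix (Fin n) (Fin n) ℝ) (hB : ∀ p, B p = (A p)⁻¹)
    (F : Fin n → Vec n × Vec n → ℝ)
    (hF : ∀ s, ∀ p : Vec n × Vec n, F s p =
      ∑ k, B p s k *
        (sgrad g L k p - ∑ j, sgradCov g (fun i => pdv L i) j k p * p.2 j))
    (x : ℝ → Vec n) (hx : ContDiff ℝ 2 x) (hxU : ∀ t, x t ∈ U) :
    (∀ t : ℝ, ∀ k : Fin n,
        deriv (fun s => pdv L k (x s, deriv x s)) t - pdx L k (x t, deriv x t) = 0)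
      ↔
    (∀ t : ℝ, ∀ s : Fin n,
        deriv (fun u => deriv x u s) t
            + ∑ i, ∑ j, Christoffel g s i j (x t) * deriv x t i * deriv x t j
          = F s (x t, deriv x t)) :=
  stmt_4_general U hU g hgpos L hL A hA hreg B hB F hF x hx hxU
end
end

section
/- Let L(x,v) be a smooth Lagrangian on U × ℝⁿ whose Legendre map λ(x,v) = (x, ∂L/∂v(x,v)) is a bijection of U × ℝⁿ onto U × ℝⁿ with smooth inverse, and let H be the Hamilton function. Then for every (x,v) ∈ U × ℝⁿ, with p = ∂L/∂v(x,v), the spatial gradients satisfy ∇_q H(x,p) = −∇_q L(x,v) for all q, where ∇_q L = ∂L/∂x^q − Σ_{a,b} v^a Γ^b_{qa}(x) ∂L/∂v^b and ∇_q H = ∂H/∂x^q + Σ_{a,b} p_a Γ^a_{qb}(x) ∂H/∂p_b. In coordinate-free form, ∇H = −(∇L) ∘ λ⁻¹. -/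
open Real Set
open scoped ContDiff

noncomputable section

/-!
Near `(x, p)`, `H` is the Legendre transform `⟨m, p⟩ - L(x, m)` with `m` the velocity component
of `λ⁻¹`. In its derivative the derivative of `m` enters only through `⟨Dm, p⟩ - ∂L/∂v (Dm)`,
which vanishes because `p = ∂L/∂v(x, v)`; hence `∂H/∂x = -∂L/∂x` and `∂H/∂p = v`, and the
Christoffel terms of `∇H` become those of `-∇L` after exchanging the summation indices.
-/

theorem ContinuousLinearMap.apply_zero_mk_eq_sum {E ι : Type*} [NormedAddCommGroup E]
    [NormedSpace ℝ E] [Fintype ι] [DecidableEq ι] (D : E × (ι → ℝ) →L[ℝ] ℝ) (z : ι → ℝ) :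
    D (0, z) = ∑ k, z k * D (0, Pi.single k 1) := by
  have hz : ((0 : E), z) = ∑ k, z k • ((0 : E), (Pi.single k 1 : ι → ℝ)) := by
    ext <;> simp [Prod.fst_sum, Prod.snd_sum, Pi.single_apply]
  rw [hz, map_sum]
  simp only [map_smul, smul_eq_mul]

section Legendre

variable {E ι : Type*} [NormedAddCommGroup E] [NormedSpace ℝ E] [Fintype ι] [DecidableEq ι]
  {L : E × (ι → ℝ) → ℝ} {m : E × (ι → ℝ) → ι → ℝ} {x : E} {v p : ι → ℝ}

def legendreTransform (L : E × (ι → ℝ) → ℝ) (m : E × (ι → ℝ) → ι → ℝ) (y : E × (ι → ℝ)) : ℝ :=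
  ∑ k, m y k * y.2 k - L (y.1, m y)

theorem fderiv_legendreTransform_apply (hL : DifferentiableAt ℝ L (x, v))
    (hm : DifferentiableAt ℝ m (x, p)) (hmv : m (x, p) = v)
    (hp : ∀ k, fderiv ℝ L (x, v) (0, Pi.single k 1) = p k) (w : E × (ι → ℝ)) :
    fderiv ℝ (legendreTransform L m) (x, p) w
      = ∑ k, v k * w.2 k - fderiv ℝ L (x, v) (w.1, 0) := by
  have hpair : HasFDerivAt (fun y : E × (ι → ℝ) => ∑ k, m y k * y.2 k)
      (∑ k, (m (x, p) k • (ContinuousLinearMap.proj k).comp (ContinuousLinearMap.snd ℝ E _)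
        + p k • (ContinuousLinearMap.proj k).comp (fderiv ℝ m (x, p)))) (x, p) :=
    HasFDerivAt.fun_sum fun k _ =>
      ((hasFDerivAt_apply k _).comp _ hm.hasFDerivAt).mul
        ((ContinuousLinearMap.proj k : (ι → ℝ) →L[ℝ] ℝ).comp
          (ContinuousLinearMap.snd ℝ E _)).hasFDerivAt
  have hLm : HasFDerivAt (fun y : E × (ι → ℝ) => L (y.1, m y))
      ((fderiv ℝ L (x, v)).comp ((ContinuousLinearMap.fst ℝ E _).prod (fderiv ℝ m (x, p))))
      (x, p) := by
    have hL' : HasFDerivAt L (fderiv ℝ L (x, v)) ((x, p).1, m (x, p)) := by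
      rw [hmv]; exact hL.hasFDerivAt
    exact hL'.comp (x, p) (hasFDerivAt_fst.prodMk hm.hasFDerivAt)
  have hF : HasFDerivAt (legendreTransform L m) _ (x, p) := hpair.fun_sub hLm
  rw [hF.fderiv]
  have hsplit : (w.1, fderiv ℝ m (x, p) w) = (w.1, 0) + (0, fderiv ℝ m (x, p) w) := by simp
  simp only [sub_apply, sum_apply, add_apply, smul_apply, ContinuousLinearMap.comp_apply,
    ContinuousLinearMap.prod_apply, ContinuousLinearMap.coe_fst',
    ContinuousLinearMap.coe_snd', ContinuousLinearMap.proj_apply, smul_eq_mul, hmv, hsplit,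
    map_add]
  rw [ContinuousLinearMap.apply_zero_mk_eq_sum (fderiv ℝ L (x, v))]
  simp only [hp, Finset.sum_add_distrib, mul_comm (p _)]
  ring

end Legendre

open Filter Topology

theorem stmt_8_general {n : ℕ} (U : Set (Vec n)) (hU : IsOpen U)
    (g : Vec n → Matrix (Fin n) (Fin n) ℝ)
    (L : Vec n × Vec n → ℝ) (hL : ContDiffOn ℝ ∞ L (U ×ˢ (univ : Set (Vec n))))
    (lam : Vec n × Vec n → Vec n × Vec n)
    (hlam : ∀ p : Vec n × Vec n, lam p = (p.1, fun k => pdv L k p))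
    (mu : Vec n × Vec n → Vec n × Vec n)
    (hmu : ContDiffOn ℝ ∞ mu (U ×ˢ (univ : Set (Vec n))))
    (hmu1 : ∀ p ∈ U ×ˢ (univ : Set (Vec n)), mu (lam p) = p)
    (hmu2 : ∀ p ∈ U ×ˢ (univ : Set (Vec n)), lam (mu p) = p)
    (H : Vec n × Vec n → ℝ)
    (hH : ∀ p : Vec n × Vec n, H p = (∑ k, (mu p).2 k * pdv L k (mu p)) - L (mu p))
    :
    ∀ x ∈ U, ∀ v : Vec n, ∀ q : Fin n,
      pdx H q (x, fun k => pdv L k (x, v))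
          + ∑ a, ∑ b, (pdv L a (x, v)) * Christoffel g a q b x *
              pdv H b (x, fun k => pdv L k (x, v))
        = -(pdx L q (x, v)
            - ∑ a, ∑ b, v a * Christoffel g b q a x * pdv L b (x, v)) := by
  intro x hx v q
  have hopen : IsOpen (U ×ˢ (univ : Set (Vec n))) := hU.prod isOpen_univ
  have hxv : ((x, v) : Vec n × Vec n) ∈ U ×ˢ univ := ⟨hx, trivial⟩
  set p : Vec n := fun k => pdv L k (x, v)
  have hxp : ((x, p) : Vec n × Vec n) ∈ U ×ˢ univ := ⟨hx, trivial⟩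
  have hmu_p : mu (x, p) = (x, v) := by simpa [hlam] using hmu1 _ hxv
  have hH_local : H =ᶠ[𝓝 (x, p)] legendreTransform L (fun y => (mu y).2) := by
    filter_upwards [hopen.mem_nhds hxp] with y hy
    obtain ⟨hfst, hsnd⟩ := Prod.ext_iff.mp ((hlam _).symm.trans (hmu2 y hy))
    simp only [hH, legendreTransform, ← hsnd, ← hfst]
  have hdH : ∀ w, fderiv ℝ H (x, p) w = ∑ k, v k * w.2 k - fderiv ℝ L (x, v) (w.1, 0) := by
    rw [hH_local.fderiv_eq]
    exact fderiv_legendreTransform_apply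
      ((hL.differentiableOn (by simp)).differentiableAt (hopen.mem_nhds hxv))
      ((hmu.differentiableOn (by simp)).differentiableAt (hopen.mem_nhds hxp)).snd
      (by simp [hmu_p]) fun k => rfl
  have hpdxH : pdx H q (x, p) = -pdx L q (x, v) := by simp [pdx, hdH]
  have hpdvH : ∀ b, pdv H b (x, p) = v b := by
    simp [pdv, hdH, Pi.single_apply, ← Prod.zero_eq_mk]
  simp only [hpdxH, hpdvH]
  rw [Finset.sum_comm]
  have hswap : ∀ a b, pdv L b (x, v) * Christoffel g b q a x * v a
      = v a * Christoffel g b q a x * pdv L b (x, v) := fun a b => by ring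
  simp only [hswap]
  ring

/-- The spatial gradients of the Hamilton function and of the Lagrange
function satisfy `∇_q H(x,p) = −∇_q L(x,v)` for `p = ∂L/∂v(x,v)`, where
`∇_q L = ∂L/∂x^q − Σ v^a Γ^b_{qa} ∂L/∂v^b` and `∇_q H = ∂H/∂x^q + Σ p_a Γ^a_{qb} ∂H/∂p_b`. -/
theorem stmt_8 {n : ℕ} (U : Set (Vec n)) (hU : IsOpen U)
    (g : Vec n → Matrix (Fin n) (Fin n) ℝ)
    (hgsmooth : ∀ i j, ContDiffOn ℝ ∞ (fun x => g x i j) U)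
    (hgpos : ∀ x ∈ U, (g x).PosDef)
    (L : Vec n × Vec n → ℝ) (hL : ContDiffOn ℝ ∞ L (U ×ˢ (univ : Set (Vec n))))
    (lam : Vec n × Vec n → Vec n × Vec n)
    (hlam : ∀ p : Vec n × Vec n, lam p = (p.1, fun k => pdv L k p))
    (hbij : Set.BijOn lam (U ×ˢ (univ : Set (Vec n))) (U ×ˢ (univ : Set (Vec n))))
    (mu : Vec n × Vec n → Vec n × Vec n)
    (hmu : ContDiffOn ℝ ∞ mu (U ×ˢ (univ : Set (Vec n))))
    (hmu1 : ∀ p ∈ U ×ˢ (univ : Set (Vec n)), mu (lam p) = p)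
    (hmu2 : ∀ p ∈ U ×ˢ (univ : Set (Vec n)), lam (mu p) = p)
    (H : Vec n × Vec n → ℝ)
    (hH : ∀ p : Vec n × Vec n, H p = (∑ k, (mu p).2 k * pdv L k (mu p)) - L (mu p))
    :
    ∀ x ∈ U, ∀ v : Vec n, ∀ q : Fin n,
      pdx H q (x, fun k => pdv L k (x, v))
          + ∑ a, ∑ b, (pdv L a (x, v)) * Christoffel g a q b x *
              pdv H b (x, fun k => pdv L k (x, v))
        = -(pdx L q (x, v)
            - ∑ a, ∑ b, v a * Christoffel g b q a x * pdv L b (x, v)) :=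
  stmt_8_general U hU g L hL lam hlam mu hmu hmu1 hmu2 H hH
end
end

section
/- Let β : (0,∞) × (0,∞) → ℝ be a C² function with ∂β/∂u(u,v) ≠ 0 and ∂β/∂v(u,v) ≠ 0 at every point, satisfying (∂²β/∂v∂u)/(∂β/∂u) = 1/v + (∂²β/∂v²)/(∂β/∂v) at every point (u,v). Then there exists a function c : (0,∞) → ℝ such that ∂β/∂u(u,v) = c(u)·v·∂β/∂v(u,v) for all u, v > 0. -/
open Set

/-!
For fixed `u`, the equation says that `β_u(u, ·)` and `v ↦ v · β_v(u, v)` have the same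
logarithmic derivative, so their quotient is constant in `v`; `c u` is its value at `v = 1`.
-/

theorem ContDiffAt.differentiableAt_fderiv_apply {𝕜 E F : Type*} [NontriviallyNormedField 𝕜]
    [NormedAddCommGroup E] [NormedSpace 𝕜 E] [NormedAddCommGroup F] [NormedSpace 𝕜 F]
    {f : E → F} {x : E} (hf : ContDiffAt 𝕜 2 f x) (w : E) :
    DifferentiableAt 𝕜 (fun p => fderiv 𝕜 f p w) x :=
  ((hf.fderiv_right (m := 1) le_rfl).differentiableAt one_ne_zero).clm_apply
    (differentiableAt_const w)

theorem DifferentiableAt.hasDerivAt_comp_prodMk_left {𝕜 E F : Type*} [NontriviallyNormedField 𝕜]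
    [NormedAddCommGroup E] [NormedSpace 𝕜 E] [NormedAddCommGroup F] [NormedSpace 𝕜 F]
    {φ : E × 𝕜 → F} {u : E} {v : 𝕜} (hφ : DifferentiableAt 𝕜 φ (u, v)) :
    HasDerivAt (fun t => φ (u, t)) (fderiv 𝕜 φ (u, v) (0, 1)) v :=
  hφ.hasFDerivAt.comp_hasDerivAt v ((hasDerivAt_const v u).prodMk (hasDerivAt_id v))

theorem eq_const_mul_mul_of_logDeriv_eq {f g f' g' : ℝ → ℝ}
    (hf : ∀ t ∈ Ioi (0:ℝ), HasDerivAt f (f' t) t) (hg : ∀ t ∈ Ioi (0:ℝ), HasDerivAt g (g' t) t)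
    (hf0 : ∀ t ∈ Ioi (0:ℝ), f t ≠ 0) (hg0 : ∀ t ∈ Ioi (0:ℝ), g t ≠ 0)
    (h : ∀ t ∈ Ioi (0:ℝ), f' t / f t = 1 / t + g' t / g t) {t : ℝ} (ht : 0 < t) :
    f t = f 1 / g 1 * t * g t := by
  set q : ℝ → ℝ := fun s => f s / (s * g s)
  have hq : ∀ s ∈ Ioi (0:ℝ), HasDerivAt q 0 s := by
    intro s hs
    have hs0 : s ≠ 0 := ne_of_gt hs
    have hquot := (hf s hs).div ((hasDerivAt_id s).mul (hg s hs)) (mul_ne_zero hs0 (hg0 s hs))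
    have hlog := h s hs
    field_simp [hf0 s hs, hg0 s hs, hs0] at hlog
    refine hquot.congr_deriv ?_
    simp only [Pi.mul_apply, id, div_eq_zero_iff]
    left
    linear_combination hlog
  have hconst : q t = q 1 := isOpen_Ioi.is_const_of_deriv_eq_zero isPreconnected_Ioi
    (fun s hs => (hq s hs).differentiableAt.differentiableWithinAt)
    (fun s hs => (hq s hs).deriv) ht (mem_Ioi.mpr one_pos)
  have hg1 := hg0 1 (mem_Ioi.mpr one_pos)
  simp only [q] at hconst
  field_simp [hg0 t ht, ht.ne'] at hconst ⊢
  linarith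

/-- If a `C²` function `β(u,v)` on `(0,∞) × (0,∞)` with nonvanishing
first partials satisfies `β''_{uv}/β'_u = 1/v + β''_{vv}/β'_v`, then
`β'_u(u,v) = c(u)·v·β'_v(u,v)` for some function `c`. -/
theorem stmt_15 (β : ℝ × ℝ → ℝ)
    (hβ : ContDiffOn ℝ 2 β (Set.Ioi (0:ℝ) ×ˢ Set.Ioi (0:ℝ)))
    (hu : ∀ u v : ℝ, 0 < u → 0 < v → fderiv ℝ β (u, v) (1, 0) ≠ 0)
    (hv : ∀ u v : ℝ, 0 < u → 0 < v → fderiv ℝ β (u, v) (0, 1) ≠ 0)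
    (hpde : ∀ u v : ℝ, 0 < u → 0 < v →
      fderiv ℝ (fun p => fderiv ℝ β p (1, 0)) (u, v) (0, 1) / fderiv ℝ β (u, v) (1, 0)
        = 1 / v +
          fderiv ℝ (fun p => fderiv ℝ β p (0, 1)) (u, v) (0, 1) / fderiv ℝ β (u, v) (0, 1)) :
    ∃ c : ℝ → ℝ, ∀ u v : ℝ, 0 < u → 0 < v →
      fderiv ℝ β (u, v) (1, 0) = c u * v * fderiv ℝ β (u, v) (0, 1) := by
  refine ⟨fun u => fderiv ℝ β (u, 1) (1, 0) / fderiv ℝ β (u, 1) (0, 1), fun u v hu0 hv0 => ?_⟩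
  have hpartial (w : ℝ × ℝ) (t : ℝ) (ht : t ∈ Ioi (0:ℝ)) :
      HasDerivAt (fun s => fderiv ℝ β (u, s) w)
        (fderiv ℝ (fun p => fderiv ℝ β p w) (u, t) (0, 1)) t := by
    have hnhds : Ioi (0:ℝ) ×ˢ Ioi (0:ℝ) ∈ nhds (u, t) :=
      (isOpen_Ioi.prod isOpen_Ioi).mem_nhds (mk_mem_prod (mem_Ioi.mpr hu0) ht)
    exact ((hβ.contDiffAt hnhds).differentiableAt_fderiv_apply w).hasDerivAt_comp_prodMk_left
  exact eq_const_mul_mul_of_logDeriv_eq (hpartial (1, 0)) (hpartial (0, 1))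
    (fun t ht => hu u t hu0 ht) (fun t ht => hv u t hu0 ht) (fun t ht => hpde u t hu0 ht) hv0
end
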